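/- arXiv:0804.0802 — 11 statements merged into one kernel-verified Lean document; each statement's English description precedes it below -/
import Mathlib

section
/- Given a k-partite density matrix ρ on ℂ^{d_1} ⊗ ⋯ ⊗ ℂ^{d_k}, suppose there are unit vectors |ψ_1⟩ ∈ ℂ^{d_1}, …, |ψ_k⟩ ∈ ℂ^{d_k} such that ⟨ψ_i| ρ^{A_i} |ψ_i⟩ ≥ 1 − ε_i for all i, where ρ^{A_i} denotes the reduced density matrix of ρ on the i-th factor. Let |Ψ⟩ := |ψ_1⟩ ⊗ ⋯ ⊗ |ψ_k⟩ and ε := ε_1 + ⋯ + ε_k. Then ⟨Ψ| ρ |Ψ⟩ ≥ 1 − ε. -/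
open Matrix
open scoped ComplexOrder

/-- The reduced density matrix of a `k`-partite state on the `i`-th factor:
entry `(a, b)` is the sum of `ρ[(j with i-th coord a), (j with i-th coord b)]`
over all choices of the other coordinates. -/
noncomputable def reducedAt {k : ℕ} {d : Fin k → ℕ}
    (ρ : Matrix ((i : Fin k) → Fin (d i)) ((i : Fin k) → Fin (d i)) ℂ) (i : Fin k) :
    Matrix (Fin (d i)) (Fin (d i)) ℂ :=
  fun a b => ∑ j : (i' : Fin k) → Fin (d i'),
    if j i = a then ρ j (Function.update j i b) else 0

/-!
Let `Pᵢ` be the projection onto `ψᵢ` acting on the `i`-th tensor factor, so that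
`⟨ψᵢ| ρ^{Aᵢ} |ψᵢ⟩ = tr (ρ Pᵢ)`; the `Pᵢ` commute and their product is the projection
onto `Ψ`.
For commuting projections `P, Q` one has `1 - PQ = (1 - P) + (1 - Q) - (1 - P)(1 - Q)` where
`(1 - P)(1 - Q)` is again a projection, hence `tr ρ(1 - PQ) ≤ tr ρ(1 - P) + tr ρ(1 - Q)`.
Induction gives the union bound `1 - tr (ρ ∏ Pᵢ) ≤ ∑ (1 - tr (ρ Pᵢ)) ≤ ∑ εᵢ`.
-/

theorem Pi.mulSingle_mul_piecewise_one_of_notMem {ι : Type*} [DecidableEq ι] {M : ι → Type*}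
    [∀ i, MulOneClass (M i)] {p : ∀ i, M i} {s : Finset ι} {a : ι} (ha : a ∉ s) :
    Pi.mulSingle a (p a) * s.piecewise p 1 = (insert a s).piecewise p 1 := by
  ext i
  rcases eq_or_ne i a with rfl | hia
  · simp [ha]
  · simp [hia]

namespace Matrix

variable {ι : Type*} [Fintype ι] {κ : ι → Type*} {R : Type*}

def piKronecker [CommSemiring R] (A : ∀ i, Matrix (κ i) (κ i) R) :
    Matrix (∀ i, κ i) (∀ i, κ i) R :=
  of fun j j' => ∏ i, A i (j i) (j' i)

@[simp]
theorem piKronecker_apply [CommSemiring R] (A : ∀ i, Matrix (κ i) (κ i) R)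
    (j j' : ∀ i, κ i) :
    piKronecker A j j' = ∏ i, A i (j i) (j' i) := rfl

theorem piKronecker_one [∀ i, DecidableEq (κ i)] [CommSemiring R] :
    piKronecker (1 : ∀ i, Matrix (κ i) (κ i) R) = 1 := by
  ext j j'
  simp [one_apply, Finset.prod_boole, funext_iff]

theorem piKronecker_mul [∀ i, Fintype (κ i)] [CommSemiring R] [DecidableEq ι]
    (A B : ∀ i, Matrix (κ i) (κ i) R) :
    piKronecker A * piKronecker B = piKronecker (A * B) := by
  ext j j'
  simp only [mul_apply, piKronecker_apply, Pi.mul_apply, Fintype.prod_sum,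
    Finset.prod_mul_distrib]

theorem conjTranspose_piKronecker [CommSemiring R] [StarRing R]
    (A : ∀ i, Matrix (κ i) (κ i) R) :
    (piKronecker A)ᴴ = piKronecker fun i => (A i)ᴴ := by
  ext j j'
  simp

theorem commute_piKronecker [∀ i, Fintype (κ i)] [CommSemiring R] [DecidableEq ι]
    {A B : ∀ i, Matrix (κ i) (κ i) R} (h : ∀ i, Commute (A i) (B i)) :
    Commute (piKronecker A) (piKronecker B) := by
  rw [Commute, SemiconjBy, piKronecker_mul, piKronecker_mul]
  exact congrArg piKronecker (funext h)

theorem isStarProjection_piKronecker [∀ i, Fintype (κ i)] [CommSemiring R] [StarRing R]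
    [DecidableEq ι] {A : ∀ i, Matrix (κ i) (κ i) R} (h : ∀ i, IsStarProjection (A i)) :
    IsStarProjection (piKronecker A) where
  isIdempotentElem := by
    rw [IsIdempotentElem, piKronecker_mul]
    exact congrArg piKronecker (funext fun i => (h i).isIdempotentElem)
  isSelfAdjoint := by
    rw [IsSelfAdjoint, star_eq_conjTranspose, conjTranspose_piKronecker]
    exact congrArg piKronecker (funext fun i => (h i).isSelfAdjoint)

theorem piKronecker_vecMulVec_star [CommSemiring R] [StarRing R] (v : ∀ i, κ i → R) :
    piKronecker (fun i => vecMulVec (v i) (star (v i)))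
      = vecMulVec (fun j => ∏ i, v i (j i)) (star fun j => ∏ i, v i (j i)) := by
  ext j j'
  simp [vecMulVec_apply, Finset.prod_mul_distrib]

theorem isStarProjection_vecMulVec_star {n : Type*} [Fintype n] [CommSemiring R] [StarRing R]
    {v : n → R} (hv : star v ⬝ᵥ v = 1) : IsStarProjection (vecMulVec v (star v)) where
  isIdempotentElem := by rw [IsIdempotentElem, vecMulVec_mul_vecMulVec, hv, one_smul]
  isSelfAdjoint := by
    rw [IsSelfAdjoint, star_eq_conjTranspose, conjTranspose_vecMulVec, star_star]

theorem trace_mul_vecMulVec_star {n : Type*} [Fintype n] [CommSemiring R] [StarRing R]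
    (M : Matrix n n R) (v : n → R) :
    (M * vecMulVec v (star v)).trace = ∑ a, ∑ b, star (v a) * M a b * v b := by
  rw [trace_mul_comm, vecMulVec_mul, trace_vecMulVec]
  simp only [dotProduct, vecMul, Pi.star_apply, Finset.mul_sum]
  rw [Finset.sum_comm]
  exact Finset.sum_congr rfl fun a _ => Finset.sum_congr rfl fun b _ => by ring

theorem piKronecker_mulSingle_apply [DecidableEq ι] [∀ i, Fintype (κ i)]
    [∀ i, DecidableEq (κ i)] [CommSemiring R] (i : ι) (A : Matrix (κ i) (κ i) R)
    (j j' : ∀ i, κ i) :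
    piKronecker (Pi.mulSingle i A) j j'
      = ∑ b, if j = Function.update j' i b then A b (j' i) else 0 := by
  simp only [Function.eq_update_iff, ite_and, Finset.sum_ite_eq, Finset.mem_univ, if_true]
  rw [piKronecker_apply, Fintype.prod_eq_mul_prod_compl i]
  rw [Pi.mulSingle_eq_same, Finset.prod_congr rfl fun m hm => by
    rw [Pi.mulSingle_eq_of_ne (by simpa using hm), one_apply]]
  simp [Finset.prod_boole]

end Matrix

theorem star_dotProduct_self_eq_one {𝕜 n : Type*} [RCLike 𝕜] [Fintype n] {v : n → 𝕜}
    (h : ∑ a, ‖v a‖ ^ 2 = 1) : star v ⬝ᵥ v = 1 := by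
  simp only [dotProduct, Pi.star_apply, RCLike.star_def, RCLike.conj_mul]
  exact_mod_cast h

section UnionBound

variable {𝕜 : Type*} [RCLike 𝕜]

open RCLike

theorem Matrix.PosSemidef.re_trace_mul_nonneg_of_isStarProjection {n : Type*} [Fintype n]
    {ρ P : Matrix n n 𝕜} (hρ : ρ.PosSemidef) (hP : IsStarProjection P) :
    0 ≤ re (ρ * P).trace := by
  have h := hρ.conjTranspose_mul_mul_same P
  rw [← star_eq_conjTranspose, hP.isSelfAdjoint] at h
  rw [← hP.isIdempotentElem.eq, ← mul_assoc, trace_mul_cycle]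
  exact (RCLike.nonneg_iff.mp h.trace_nonneg).1

theorem Matrix.PosSemidef.re_trace_mul_one_sub_mul_le {n : Type*} [Fintype n] [DecidableEq n]
    {ρ P Q : Matrix n n 𝕜} (hρ : ρ.PosSemidef) (hP : IsStarProjection P)
    (hQ : IsStarProjection Q) (hPQ : Commute P Q) :
    re (ρ * (1 - P * Q)).trace ≤ re (ρ * (1 - P)).trace + re (ρ * (1 - Q)).trace := by
  have hR : IsStarProjection ((1 - P) * (1 - Q)) :=
    hP.one_sub.mul hQ.one_sub <|
      (Commute.one_right _).sub_right <| (Commute.one_left Q).sub_left hPQ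
  have hsplit : 1 - P * Q = (1 - P) + (1 - Q) - (1 - P) * (1 - Q) := by noncomm_ring
  have := hρ.re_trace_mul_nonneg_of_isStarProjection hR
  rw [hsplit, mul_sub, mul_add, trace_sub, trace_add, map_sub, map_add]
  linarith

variable {ι : Type*} [Fintype ι] [DecidableEq ι] {κ : ι → Type*} [∀ i, Fintype (κ i)]
  [∀ i, DecidableEq (κ i)]

theorem Matrix.PosSemidef.re_trace_mul_one_sub_piKronecker_le
    {ρ : Matrix (∀ i, κ i) (∀ i, κ i) 𝕜} (hρ : ρ.PosSemidef)
    {p : ∀ i, Matrix (κ i) (κ i) 𝕜} (hp : ∀ i, IsStarProjection (p i)) (s : Finset ι) :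
    re (ρ * (1 - piKronecker (s.piecewise p 1))).trace
      ≤ ∑ i ∈ s, re (ρ * (1 - piKronecker (Pi.mulSingle i (p i)))).trace := by
  induction s using Finset.induction_on with
  | empty => simp [piKronecker_one]
  | @insert a s ha ih =>
    have hPa : IsStarProjection (piKronecker (Pi.mulSingle a (p a))) :=
      isStarProjection_piKronecker fun i => by
        rcases eq_or_ne i a with rfl | hia
        · simpa using hp i
        · simp [hia, IsStarProjection.one]
    have hQs : IsStarProjection (piKronecker (s.piecewise p 1)) :=
      isStarProjection_piKronecker fun i => by
        by_cases hi : i ∈ s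
        · simpa [hi] using hp i
        · simp [hi, IsStarProjection.one]
    have hcomm :
        Commute (piKronecker (Pi.mulSingle a (p a))) (piKronecker (s.piecewise p 1)) :=
      commute_piKronecker fun i => by
        rcases eq_or_ne i a with rfl | hia
        · simp [ha]
        · simp [Pi.mulSingle_eq_of_ne hia]
    rw [Finset.sum_insert ha, ← Pi.mulSingle_mul_piecewise_one_of_notMem ha, ← piKronecker_mul]
    have := hρ.re_trace_mul_one_sub_mul_le hPa hQs hcomm
    linarith

end UnionBound

theorem trace_reducedAt_mul {k : ℕ} {d : Fin k → ℕ}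
    (ρ : Matrix ((i : Fin k) → Fin (d i)) ((i : Fin k) → Fin (d i)) ℂ) (i : Fin k)
    (A : Matrix (Fin (d i)) (Fin (d i)) ℂ) :
    (reducedAt ρ i * A).trace = (ρ * piKronecker (Pi.mulSingle i A)).trace := by
  have hL : (reducedAt ρ i * A).trace
      = ∑ j, ∑ b, ρ j (Function.update j i b) * A b (j i) := by
    simp_rw [trace, diag_apply, mul_apply, reducedAt, Finset.sum_mul, ite_mul, zero_mul]
    rw [Finset.sum_congr rfl fun a _ => Finset.sum_comm, Finset.sum_comm]
    refine Finset.sum_congr rfl fun j _ => ?_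
    rw [Finset.sum_comm]
    simp
  have hR : (ρ * piKronecker (Pi.mulSingle i A)).trace
      = ∑ j, ∑ b, ρ j (Function.update j i b) * A b (j i) := by
    refine Finset.sum_congr rfl fun j _ => ?_
    simp_rw [diag_apply, mul_apply, piKronecker_mulSingle_apply, Finset.mul_sum, mul_ite,
      mul_zero]
    rw [Finset.sum_comm]
    simp
  rw [hL, hR]

/-- if each reduced state has squared fidelity ≥ 1 − ε_i with a pure state
|ψ_i⟩, then ρ has squared fidelity ≥ 1 − ∑ ε_i with |ψ_1⟩ ⊗ ⋯ ⊗ |ψ_k⟩. -/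
theorem fidelity_tensor_product {k : ℕ} {d : Fin k → ℕ}
    (ρ : Matrix ((i : Fin k) → Fin (d i)) ((i : Fin k) → Fin (d i)) ℂ)
    (hρ : ρ.PosSemidef) (hρtr : ρ.trace = 1)
    (ψ : (i : Fin k) → Fin (d i) → ℂ)
    (hψ : ∀ i, ∑ a, ‖ψ i a‖ ^ 2 = 1)
    (ε : Fin k → ℝ)
    (h : ∀ i, 1 - ε i ≤
      (∑ a, ∑ b, (starRingEnd ℂ) (ψ i a) * reducedAt ρ i a b * ψ i b).re) :
    1 - ∑ i, ε i ≤
      (∑ j, ∑ j', (starRingEnd ℂ) (∏ i, ψ i (j i)) * ρ j j' * ∏ i, ψ i (j' i)).re := by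
  set π := fun i => vecMulVec (ψ i) (star (ψ i)) with hπ_def
  have hπ : ∀ i, IsStarProjection (π i) := fun i =>
    isStarProjection_vecMulVec_star (star_dotProduct_self_eq_one (hψ i))
  have hglobal :
      (∑ j, ∑ j', (starRingEnd ℂ) (∏ i, ψ i (j i)) * ρ j j' * ∏ i, ψ i (j' i))
      = (ρ * piKronecker π).trace := by
    rw [hπ_def, piKronecker_vecMulVec_star, trace_mul_vecMulVec_star]
    simp
  have hlocal : ∀ i, (∑ a, ∑ b, (starRingEnd ℂ) (ψ i a) * reducedAt ρ i a b * ψ i b)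
      = (ρ * piKronecker (Pi.mulSingle i (π i))).trace := fun i => by
    rw [← trace_reducedAt_mul, trace_mul_vecMulVec_star]
    rfl
  have hunion := hρ.re_trace_mul_one_sub_piKronecker_le hπ Finset.univ
  simp only [Finset.piecewise_univ, mul_sub, mul_one, trace_sub, hρtr, map_sub,
    RCLike.one_re, RCLike.re_to_complex] at hunion
  simp only [hlocal] at h
  rw [hglobal]
  have := Finset.sum_le_sum fun i (_ : i ∈ Finset.univ) => h i
  simp only [Finset.sum_sub_distrib] at this hunion
  linarith
end

section
/- For every density matrix ρ and unit vector |ψ⟩ on a finite-dimensional complex Hilbert space, ⟨ψ| ρ |ψ⟩ + ‖ρ − |ψ⟩⟨ψ|‖_tr² ≤ 1. -/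
/-!
Diagonalize `ρ - |ψ⟩⟨ψ| = U diag(d) Uᴴ` and put `v = Uᴴ ψ`. Then `⟨ψ|ρ|ψ⟩ = 1 + ∑ dᵢ |vᵢ|²`,
`∑ dᵢ = 0`, and `ρ ≥ 0` says `diag(d) + v vᴴ ≥ 0`. Its 1×1 and 2×2 principal minors leave at most
one negative eigenvalue `d_k = -μ` and give `μ |vᵢ|² ≤ (|v_k|² - μ) dᵢ` for `i ≠ k`. As `0 ≤ dᵢ ≤ μ`,
this yields `dᵢ |vᵢ|² ≤ (|v_k|² - μ) dᵢ`, and summing with `∑ dᵢ = 0` gives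
`∑ dᵢ |vᵢ|² ≤ -μ²`, while the trace distance is `½ ∑ |dᵢ| = μ`.
-/

open Matrix
open scoped ComplexOrder

/-- Trace distance between two matrices: half the sum of the absolute values of the
eigenvalues of their (Hermitian) difference. -/
noncomputable def traceDist {n : ℕ} (ρ σ : Matrix (Fin n) (Fin n) ℂ) : ℝ :=
  if h : (ρ - σ).IsHermitian then (1 / 2) * ∑ i, |h.eigenvalues i| else 0

section EigenvalueInequality

variable {ι : Type*} {d t : ι → ℝ}

theorem nonneg_of_minors_of_neg (hdiag : ∀ i, 0 ≤ d i + t i)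
    (hminor : ∀ i j, i ≠ j → 0 ≤ d i * d j + d i * t j + d j * t i)
    {i k : ι} (hik : i ≠ k) (hk : d k < 0) : 0 ≤ d i := by
  by_contra! hi
  nlinarith [hdiag i, hdiag k, hminor i k hik, mul_pos_of_neg_of_neg hi hk]

theorem sum_mul_add_sq_half_sum_abs_nonpos_of_minors [Fintype ι] (hd : ∑ i, d i = 0)
    (hdiag : ∀ i, 0 ≤ d i + t i)
    (hminor : ∀ i j, i ≠ j → 0 ≤ d i * d j + d i * t j + d j * t i) :
    ∑ i, d i * t i + (1 / 2 * ∑ i, |d i|) ^ 2 ≤ 0 := by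
  classical
  by_cases hneg : 0 ≤ d
  · simp [(Fintype.sum_eq_zero_iff_of_nonneg hneg).1 hd]
  obtain ⟨k, hk⟩ : ∃ k, d k < 0 := by simpa [Pi.le_def] using hneg
  have hnonneg : ∀ i ≠ k, 0 ≤ d i := fun i hi => nonneg_of_minors_of_neg hdiag hminor hi hk
  have hle : ∀ i ≠ k, d i ≤ -d k := by
    intro i hi
    have := Finset.single_le_sum (fun j hj => hnonneg j (Finset.ne_of_mem_erase hj))
      (Finset.mem_erase.2 ⟨hi, Finset.mem_univ i⟩)
    have := Finset.add_sum_erase _ d (Finset.mem_univ k)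
    linarith
  have habs : ∑ i, |d i| = -2 * d k := by
    have : ∑ i, (|d i| - d i) = |d k| - d k :=
      Fintype.sum_eq_single k fun i hi => by rw [abs_of_nonneg (hnonneg i hi), sub_self]
    rw [Finset.sum_sub_distrib, hd, abs_of_neg hk] at this
    linarith
  have hterm : ∀ i ≠ k, d i * (t i - (t k + d k)) ≤ 0 := by
    intro i hi
    have hdi := hnonneg i hi
    have hscaled : -d k * (d i * (t i - (t k + d k))) ≤ 0 := by
      nlinarith [mul_nonneg hdi (hminor i k hi),
        mul_nonneg (hdiag k) (mul_nonneg hdi (sub_nonneg.2 (hle i hi)))]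
    exact nonpos_of_mul_nonpos_right (by linarith) (neg_pos.2 hk)
  have hshift : ∑ i, d i * t i = ∑ i, d i * (t i - (t k + d k)) := by
    simp [mul_sub, Finset.sum_sub_distrib, ← Finset.sum_mul, hd]
  have hrest : ∑ i ∈ Finset.univ.erase k, d i * (t i - (t k + d k)) ≤ 0 :=
    Finset.sum_nonpos fun i hi => hterm i (Finset.ne_of_mem_erase hi)
  rw [hshift, habs, ← Finset.add_sum_erase _ _ (Finset.mem_univ k)]
  nlinarith

end EigenvalueInequality

theorem conjTranspose_mul_vecMulVec_star_mul {α m n : Type*} [Fintype m] [CommSemiring α]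
    [StarRing α] (B : Matrix m n α) (x : m → α) :
    Bᴴ * vecMulVec x (star x) * B = vecMulVec (Bᴴ *ᵥ x) (star (Bᴴ *ᵥ x)) := by
  rw [mul_vecMulVec, vecMulVec_mul, star_mulVec, conjTranspose_conjTranspose]

section RCLike

variable {𝕜 ι : Type*} [RCLike 𝕜]

theorem star_dotProduct_self [Fintype ι] (w : ι → 𝕜) :
    star w ⬝ᵥ w = ((∑ i, ‖w i‖ ^ 2 : ℝ) : 𝕜) := by
  push_cast
  exact Finset.sum_congr rfl fun i _ => by rw [Pi.star_apply, RCLike.star_def, RCLike.conj_mul]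

theorem star_dotProduct_mulVec_eq_sum_sum [Fintype ι] (A : Matrix ι ι 𝕜) (x : ι → 𝕜) :
    star x ⬝ᵥ (A *ᵥ x) = ∑ a, ∑ b, starRingEnd 𝕜 (x a) * A a b * x b := by
  simp only [dotProduct, mulVec, Pi.star_apply, RCLike.star_def, Finset.mul_sum, mul_assoc]

variable [DecidableEq ι]

theorem star_dotProduct_diagonal_mulVec [Fintype ι] (d : ι → ℝ) (w : ι → 𝕜) :
    star w ⬝ᵥ (diagonal (RCLike.ofReal ∘ d) *ᵥ w) = ((∑ i, d i * ‖w i‖ ^ 2 : ℝ) : 𝕜) := by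
  push_cast
  refine Finset.sum_congr rfl fun i _ => ?_
  rw [mulVec_diagonal, Pi.star_apply, RCLike.star_def, Function.comp_apply, mul_left_comm,
    RCLike.conj_mul]

section RankOnePerturbation

variable {d : ι → ℝ} {v : ι → 𝕜}

theorem add_norm_sq_nonneg_of_posSemidef
    (h : (diagonal (RCLike.ofReal ∘ d) + vecMulVec v (star v)).PosSemidef) (i : ι) :
    0 ≤ d i + ‖v i‖ ^ 2 := by
  have := h.diag_nonneg (i := i)
  simp only [Matrix.add_apply, diagonal_apply_eq, Function.comp_apply, vecMulVec_apply,
    Pi.star_apply, RCLike.star_def, RCLike.mul_conj] at this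
  exact_mod_cast this

theorem minor_nonneg_of_posSemidef
    (h : (diagonal (RCLike.ofReal ∘ d) + vecMulVec v (star v)).PosSemidef) {i j : ι}
    (hij : i ≠ j) : 0 ≤ d i * d j + d i * ‖v j‖ ^ 2 + d j * ‖v i‖ ^ 2 := by
  have := (h.submatrix ![i, j]).det_nonneg
  simp only [det_fin_two, submatrix_apply, Matrix.cons_val_zero, Matrix.cons_val_one,
    Matrix.add_apply, diagonal_apply_eq, diagonal_apply_ne _ hij, diagonal_apply_ne _ hij.symm,
    Function.comp_apply, vecMulVec_apply, Pi.star_apply, RCLike.star_def, zero_add] at this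
  have hswap : (v i * (starRingEnd 𝕜) (v j)) * (v j * (starRingEnd 𝕜) (v i)) =
      (v i * (starRingEnd 𝕜) (v i)) * (v j * (starRingEnd 𝕜) (v j)) := by ring
  rw [hswap, RCLike.mul_conj, RCLike.mul_conj] at this
  have : (0 : 𝕜) ≤ ((d i * d j + d i * ‖v j‖ ^ 2 + d j * ‖v i‖ ^ 2 : ℝ) : 𝕜) := by
    convert this using 1; push_cast; ring
  exact_mod_cast this

theorem sum_mul_norm_sq_add_sq_half_sum_abs_nonpos [Fintype ι]
    (h : (diagonal (RCLike.ofReal ∘ d) + vecMulVec v (star v)).PosSemidef)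
    (hd : ∑ i, d i = 0) :
    ∑ i, d i * ‖v i‖ ^ 2 + (1 / 2 * ∑ i, |d i|) ^ 2 ≤ 0 :=
  sum_mul_add_sq_half_sum_abs_nonpos_of_minors hd (add_norm_sq_nonneg_of_posSemidef h)
    fun _ _ hij => minor_nonneg_of_posSemidef h hij

end RankOnePerturbation

namespace Matrix.IsHermitian

variable [Fintype ι] {A : Matrix ι ι 𝕜} (hA : A.IsHermitian)

theorem conjTranspose_eigenvectorUnitary_mul_mul :
    (hA.eigenvectorUnitary : Matrix ι ι 𝕜)ᴴ * A * (hA.eigenvectorUnitary : Matrix ι ι 𝕜) =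
      diagonal (RCLike.ofReal ∘ hA.eigenvalues) := by
  rw [← hA.conjStarAlgAut_star_eigenvectorUnitary, Unitary.conjStarAlgAut_star_apply,
    star_eq_conjTranspose]

theorem star_dotProduct_mulVec_eq_sum_eigenvalues (x : ι → 𝕜) :
    star x ⬝ᵥ (A *ᵥ x) = ((∑ i, hA.eigenvalues i *
      ‖((hA.eigenvectorUnitary : Matrix ι ι 𝕜)ᴴ *ᵥ x) i‖ ^ 2 : ℝ) : 𝕜) := by
  conv_lhs => rw [hA.spectral_theorem, Unitary.conjStarAlgAut_apply]
  rw [← star_dotProduct_diagonal_mulVec, ← mulVec_mulVec, ← mulVec_mulVec, dotProduct_mulVec,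
    star_mulVec, conjTranspose_conjTranspose, star_eq_conjTranspose]

end Matrix.IsHermitian

end RCLike

/-- ⟨ψ|ρ|ψ⟩ + ‖ρ − |ψ⟩⟨ψ|‖_tr² ≤ 1. -/
theorem fidelity_traceDist {n : ℕ} (ρ : Matrix (Fin n) (Fin n) ℂ)
    (hρ : ρ.PosSemidef) (hρtr : ρ.trace = 1)
    (ψ : Fin n → ℂ) (hψ : ∑ i, ‖ψ i‖ ^ 2 = 1) :
    (∑ a, ∑ b, (starRingEnd ℂ) (ψ a) * ρ a b * ψ b).re
      + traceDist ρ (Matrix.vecMulVec ψ (star ψ)) ^ 2 ≤ 1 := by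
  set P := vecMulVec ψ (star ψ)
  have hH : (ρ - P).IsHermitian := hρ.1.sub (posSemidef_vecMulVec_self_star ψ).1
  set U : Matrix (Fin n) (Fin n) ℂ := (hH.eigenvectorUnitary : Matrix (Fin n) (Fin n) ℂ)
  have hunit : star ψ ⬝ᵥ ψ = 1 := by rw [star_dotProduct_self, hψ, RCLike.ofReal_one]
  have hM : (diagonal (RCLike.ofReal ∘ hH.eigenvalues) +
      vecMulVec (Uᴴ *ᵥ ψ) (star (Uᴴ *ᵥ ψ))).PosSemidef := by
    have := hρ.conjTranspose_mul_mul_same U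
    rwa [← sub_add_cancel ρ P, Matrix.mul_add, Matrix.add_mul,
      hH.conjTranspose_eigenvectorUnitary_mul_mul, conjTranspose_mul_vecMulVec_star_mul] at this
  have htrace : ∑ i, hH.eigenvalues i = 0 := by
    have := hH.trace_eq_sum_eigenvalues
    rw [trace_sub, hρtr, trace_vecMulVec, dotProduct_comm, hunit, sub_self] at this
    exact (RCLike.ofReal_eq_zero (K := ℂ)).1 (by rw [RCLike.ofReal_sum]; exact this.symm)
  have hfid : (∑ a, ∑ b, (starRingEnd ℂ) (ψ a) * ρ a b * ψ b).re =
      ∑ i, hH.eigenvalues i * ‖(Uᴴ *ᵥ ψ) i‖ ^ 2 + 1 := by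
    have hsplit : ρ *ᵥ ψ = (ρ - P) *ᵥ ψ + P *ᵥ ψ := by rw [← add_mulVec, sub_add_cancel]
    rw [← star_dotProduct_mulVec_eq_sum_sum, hsplit, dotProduct_add, hH.star_dotProduct_mulVec_eq_sum_eigenvalues,
      vecMulVec_mulVec, hunit, MulOpposite.op_one, one_smul, hunit, Complex.add_re,
      Complex.one_re]
    rfl
  rw [traceDist, dif_pos hH, hfid]
  linarith [sum_mul_norm_sq_add_sq_half_sum_abs_nonpos hM htrace]
end

section
/- Let κ > 0. There is an N₀ such that for all even N ≥ N₀ the following holds. Let (p_1,…,p_N) be a probability distribution on [N] with (1/2)∑_{i=1}^N |p_i − 1/N| ≥ κ. Let M be a perfect matching on [N] chosen uniformly at random, and let S be the set of edges (i,j) ∈ M such that p_i/p_j + p_j/p_i ≥ 2 + κ²/16 (where the condition is stipulated to hold whenever p_i = 0 or p_j = 0). Then with probability at least 1/3 over the choice of M (equivalently, for at least a 1/3 fraction of all perfect matchings of [N]), we have ∑_{(i,j)∈S} (p_i + p_j) ≥ κ/12. -/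
open Finset

/-- A perfect matching on `Fin N`, encoded as a fixed-point-free involution:
each edge of the matching is an unordered pair `{i, π i}`. -/
def IsPerfectMatching {N : ℕ} (π : Equiv.Perm (Fin N)) : Prop :=
  (∀ i, π (π i) = i) ∧ ∀ i, π i ≠ i

instance {N : ℕ} : DecidablePred (IsPerfectMatching (N := N)) := fun _ =>
  instDecidableAnd

open Equiv

/-!
Call `i` heavy when `p i > θ`, where `θ = κ ^ 2 / 16`. A uniformly random perfect matching is
invariant in distribution under conjugation, so `π j = i` has probability `1 / (N - 1)` for `i ≠ j`,
and two constraints `π j = i`, `π j' = i'` hold with probability at most `1 / ((N - 1) (N - 3))`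
unless one forces the other (`(i, i') = (j', j)`).

If the heavy mass is at least `κ / 12`, the unbalanced edges carry all of it unless some heavy `i`
is matched to a partner of mass `> θ / 3` (a mass ratio of at least `3` is unbalanced); there are at
most `(1 / θ) (3 / θ)` such pairs, so this happens with probability at most `3 / (θ ^ 2 (N - 1))`.

Otherwise, by the total variation bound, the pairs `(i, j)` with `i` not heavy and
`p i ≥ (1 + κ / 3) p j` have total weight `∑ p i ≥ (2κ / 3 - κ / 12) N`. Crediting `p i` to each
such pair in the matching gives a weight `W π` below the unbalanced mass, of mean at least
`7κ / 12`; its summands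
are at most `θ` and the pair events are nearly independent, so its variance is at most
`2θ + 8 / (N - 3)`, and Chebyshev's inequality bounds the probability that `W π < κ / 12`.
-/

theorem card_filter_lt_mul_le_sum {ι : Type*} (s : Finset ι) {p : ι → ℝ}
    (hp : ∀ i ∈ s, 0 ≤ p i) (c : ℝ) : #(s.filter (c < p ·)) * c ≤ ∑ i ∈ s, p i :=
  calc _ = ∑ _i ∈ s.filter (c < p ·), c := by rw [sum_const, nsmul_eq_mul]
    _ ≤ ∑ i ∈ s.filter (c < p ·), p i := sum_le_sum fun i hi => (mem_filter.1 hi).2.le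
    _ ≤ _ := sum_le_sum_of_subset_of_nonneg (filter_subset _ _) fun i hi _ => hp i hi

theorem card_filter_lt_sub_mul_sq_le {ι : Type*} {s : Finset ι} {W : ι → ℝ} {μ v t : ℝ}
    (h1 : ∑ x ∈ s, W x = #s * μ) (h2 : ∑ x ∈ s, W x ^ 2 ≤ #s * (μ ^ 2 + v)) (ht : 0 ≤ t) :
    #(s.filter (W · < μ - t)) * t ^ 2 ≤ #s * v := by
  have hvar : ∑ x ∈ s, (W x - μ) ^ 2 = ∑ x ∈ s, W x ^ 2 - #s * μ ^ 2 := by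
    simp only [sub_sq, sum_add_distrib, sum_sub_distrib, ← sum_mul, ← mul_sum, h1, sum_const,
      nsmul_eq_mul]
    ring
  calc _ = ∑ x ∈ s.filter (W · < μ - t), t ^ 2 := by rw [sum_const, nsmul_eq_mul]
    _ ≤ ∑ x ∈ s.filter (W · < μ - t), (W x - μ) ^ 2 := by
        refine sum_le_sum fun x hx => ?_
        have hx : W x < μ - t := (mem_filter.1 hx).2
        nlinarith
    _ ≤ ∑ x ∈ s, (W x - μ) ^ 2 :=
        sum_le_sum_of_subset_of_nonneg (filter_subset _ _) fun _ _ _ => sq_nonneg _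
    _ ≤ _ := by linarith

theorem card_le_three_mul_card_filter_le {ι : Type*} {s : Finset ι} {f : ι → ℝ} {c : ℝ}
    (h : (#(s.filter (f · < c)) : ℝ) ≤ 2 / 3 * #s) : (#s : ℝ) ≤ 3 * #(s.filter (c ≤ f ·)) := by
  have hsplit := card_filter_add_card_filter_not (s := s) (f · < c)
  simp only [not_lt] at hsplit
  have : (#s : ℝ) = #(s.filter (f · < c)) + #(s.filter (c ≤ f ·)) := by exact_mod_cast hsplit.symm
  linarith

theorem half_sum_abs_eq_sum_negPart {ι : Type*} (s : Finset ι) {x : ι → ℝ}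
    (hx : ∑ i ∈ s, x i = 0) : 1 / 2 * ∑ i ∈ s, |x i| = ∑ i ∈ s, (x i)⁻ := by
  have habs : ∀ i, |x i| = x i + 2 * (x i)⁻ := fun i => by
    linarith [posPart_add_negPart (x i), posPart_sub_negPart (x i)]
  rw [sum_congr rfl fun i _ => habs i, sum_add_distrib, hx, ← mul_sum]
  ring

theorem add_inv_le_div_add_div {a b c : ℝ} (ha : 0 < a) (hc : 1 ≤ c) (h : c * a ≤ b) :
    c + c⁻¹ ≤ a / b + b / a := by
  have hx : c ≤ b / a := (le_div_iff₀ ha).2 h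
  have hc0 : 0 < c := one_pos.trans_le hc
  have hb : 0 < b := by nlinarith
  rw [← inv_div, ← sub_nonneg]
  have key : (b / a)⁻¹ + b / a - (c + c⁻¹) = (b / a - c) * (b / a * c - 1) / (b / a * c) := by
    field_simp
    ring
  rw [key]
  have hxc : 1 ≤ b / a * c := by nlinarith
  exact div_nonneg (mul_nonneg (by linarith) (by linarith)) (by linarith)

variable {N : ℕ}

theorem IsPerfectMatching.conj {π : Perm (Fin N)} (hπ : IsPerfectMatching π)
    (σ : Perm (Fin N)) : IsPerfectMatching (σ * π * σ⁻¹) := by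
  refine ⟨fun i => by simp [hπ.1], fun i h => hπ.2 (σ⁻¹ i) ?_⟩
  simpa [Perm.mul_apply, ← Equiv.eq_symm_apply] using h

def matchings (N : ℕ) : Finset (Perm (Fin N)) := univ.filter IsPerfectMatching

theorem card_matchings_filter_conj (σ : Perm (Fin N)) (P : Perm (Fin N) → Prop)
    [DecidablePred P] :
    #((matchings N).filter fun π => P (σ * π * σ⁻¹)) = #((matchings N).filter P) := by
  refine card_nbij' (fun π => σ * π * σ⁻¹) (fun π => σ⁻¹ * π * σ) ?_ ?_ ?_ ?_
  · intro π hπ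
    simp only [matchings, mem_coe, mem_filter, mem_univ, true_and] at hπ ⊢
    exact ⟨hπ.1.conj σ, hπ.2⟩
  · intro π hπ
    simp only [matchings, mem_coe, mem_filter, mem_univ, true_and] at hπ ⊢
    refine ⟨by simpa using hπ.1.conj σ⁻¹, by simpa [mul_assoc] using hπ.2⟩
  · intro π _
    simp [mul_assoc]
  · intro π _
    simp [mul_assoc]

theorem card_matchings_apply_eq_of_ne {j i i' : Fin N} (hi : i ≠ j) (hi' : i' ≠ j) :
    #((matchings N).filter (· j = i)) = #((matchings N).filter (· j = i')) := by
  rw [← card_matchings_filter_conj (swap i i')]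
  congr 1
  refine filter_congr fun π _ => ?_
  rw [Perm.mul_apply, Perm.mul_apply, swap_inv, swap_apply_of_ne_of_ne hi.symm hi'.symm,
    swap_apply_eq_iff, swap_apply_left]

theorem card_matchings_apply_self (j : Fin N) : #((matchings N).filter (· j = j)) = 0 := by
  rw [card_eq_zero, filter_eq_empty_iff]
  exact fun π hπ => (mem_filter.1 hπ).2.2 j

theorem card_matchings_apply_mul {j i : Fin N} (hij : i ≠ j) :
    #((matchings N).filter (· j = i)) * (N - 1) = #(matchings N) := by
  conv_rhs => rw [card_eq_sum_card_fiberwise (f := fun π => π j) fun _ _ => mem_univ _]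
  rw [← add_sum_erase _ _ (mem_univ j), card_matchings_apply_self, zero_add,
    sum_congr rfl fun i' hi' => card_matchings_apply_eq_of_ne (ne_of_mem_erase hi') hij,
    sum_const, card_erase_of_mem (mem_univ j), card_univ, Fintype.card_fin, smul_eq_mul, mul_comm]

theorem card_matchings_apply_mul_le (j i : Fin N) :
    #((matchings N).filter (· j = i)) * (N - 1) ≤ #(matchings N) := by
  rcases eq_or_ne i j with rfl | hij
  · simp [card_matchings_apply_self]
  · exact (card_matchings_apply_mul hij).le

theorem card_matchings_apply_apply_eq {j j' i i' i'' : Fin N}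
    (hi' : i' ∉ ({j, j', i} : Finset (Fin N))) (hi'' : i'' ∉ ({j, j', i} : Finset (Fin N))) :
    #((matchings N).filter fun π => π j = i ∧ π j' = i') =
      #((matchings N).filter fun π => π j = i ∧ π j' = i'') := by
  simp only [mem_insert, mem_singleton, not_or] at hi' hi''
  rw [← card_matchings_filter_conj (swap i' i'')]
  congr 1
  refine filter_congr fun π _ => ?_
  simp only [Perm.mul_apply, swap_inv, swap_apply_of_ne_of_ne (Ne.symm hi'.1) (Ne.symm hi''.1),
    swap_apply_of_ne_of_ne (Ne.symm hi'.2.1) (Ne.symm hi''.2.1), swap_apply_eq_iff,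
    swap_apply_left, swap_apply_of_ne_of_ne (Ne.symm hi'.2.2) (Ne.symm hi''.2.2)]

theorem card_matchings_apply_apply_mul_le {j j' i i' : Fin N} (hjj' : j ≠ j')
    (h : ¬(i = j' ∧ i' = j)) :
    #((matchings N).filter fun π => π j = i ∧ π j' = i') * ((N - 1) * (N - 3)) ≤
      #(matchings N) := by
  by_cases hi' : i' ∈ ({j, j', i} : Finset (Fin N))
  · suffices (matchings N).filter (fun π => π j = i ∧ π j' = i') = ∅ by simp [this]
    refine filter_eq_empty_iff.2 fun π hπ ⟨hj, hj'⟩ => ?_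
    obtain ⟨hinv, hfix⟩ := (mem_filter.1 hπ).2
    simp only [mem_insert, mem_singleton] at hi'
    rcases hi' with rfl | rfl | rfl
    · exact h ⟨by rw [← hj, ← hj', hinv], rfl⟩
    · exact hfix _ hj'
    · exact hjj' (π.injective (hj.trans hj'.symm))
  have hfiber : #((matchings N).filter fun π => π j = i) =
      ∑ i'', #((matchings N).filter fun π => π j = i ∧ π j' = i'') := by
    rw [card_eq_sum_card_fiberwise (f := fun π => π j') fun _ _ => mem_univ _]
    simp only [filter_filter]
  have hcompl : N - 3 ≤ #({j, j', i} : Finset (Fin N))ᶜ := by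
    rw [card_compl, Fintype.card_fin]
    exact Nat.sub_le_sub_left card_le_three N
  have hle : #((matchings N).filter fun π => π j = i ∧ π j' = i') * (N - 3) ≤
      #((matchings N).filter fun π => π j = i) :=
    calc _ ≤ #((matchings N).filter fun π => π j = i ∧ π j' = i') * #({j, j', i}ᶜ) :=
          Nat.mul_le_mul_left _ hcompl
      _ = ∑ i'' ∈ {j, j', i}ᶜ, #((matchings N).filter fun π => π j = i ∧ π j' = i'') := by
          rw [sum_congr rfl fun i'' hi'' =>
            (card_matchings_apply_apply_eq hi' (mem_compl.1 hi'')).symm, sum_const, smul_eq_mul,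
            mul_comm]
      _ ≤ _ := hfiber ▸ sum_le_sum_of_subset (subset_univ _)
  calc _ = #((matchings N).filter fun π => π j = i ∧ π j' = i') * (N - 3) * (N - 1) := by ring
    _ ≤ #((matchings N).filter fun π => π j = i) * (N - 1) := Nat.mul_le_mul_right _ hle
    _ ≤ _ := card_matchings_apply_mul_le j i

theorem card_matchings_filter_exists_apply_mem_mul_le (A B : Finset (Fin N)) :
    #((matchings N).filter fun π => ∃ i ∈ A, π i ∈ B) * (N - 1) ≤
      #A * #B * #(matchings N) := by
  have hsub : (matchings N).filter (fun π => ∃ i ∈ A, π i ∈ B) ⊆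
      A.biUnion fun i => B.biUnion fun i' => (matchings N).filter (· i = i') := by
    intro π hπ
    obtain ⟨hπM, i, hi, hπi⟩ := mem_filter.1 hπ
    exact mem_biUnion.2 ⟨i, hi, mem_biUnion.2 ⟨π i, hπi, mem_filter.2 ⟨hπM, rfl⟩⟩⟩
  calc _ ≤ (∑ i ∈ A, ∑ i' ∈ B, #((matchings N).filter (· i = i'))) * (N - 1) :=
        Nat.mul_le_mul_right _ ((card_le_card hsub).trans
          (card_biUnion_le.trans (sum_le_sum fun _ _ => card_biUnion_le)))
    _ ≤ ∑ _i ∈ A, ∑ _i' ∈ B, #(matchings N) := by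
        simp only [sum_mul]
        exact sum_le_sum fun i _ => sum_le_sum fun i' _ => card_matchings_apply_mul_le i i'
    _ = _ := by simp only [sum_const, smul_eq_mul, mul_assoc]

theorem sum_matchings_apply (j : Fin N) (h : Fin N → ℝ) :
    ∑ π ∈ matchings N, h (π j) = ∑ i, (#((matchings N).filter (· j = i)) : ℝ) * h i := by
  rw [← sum_fiberwise' (matchings N) (fun π => π j) h]
  simp only [sum_const, nsmul_eq_mul]

theorem sum_matchings_apply_apply (j j' : Fin N) (h : Fin N → Fin N → ℝ) :
    ∑ π ∈ matchings N, h (π j) (π j') =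
      ∑ i, ∑ i', (#((matchings N).filter fun π => π j = i ∧ π j' = i') : ℝ) * h i i' := by
  rw [← sum_fiberwise' (matchings N) (fun π => (π j, π j')) fun x => h x.1 x.2,
    Fintype.sum_prod_type]
  simp only [sum_const, nsmul_eq_mul, Prod.mk.injEq]

theorem sum_matchings_apply_mul (j : Fin N) (h : Fin N → ℝ) :
    (∑ π ∈ matchings N, h (π j)) * (N - 1) = #(matchings N) * ∑ i ∈ univ.erase j, h i := by
  rw [sum_matchings_apply, ← add_sum_erase _ _ (mem_univ j), card_matchings_apply_self,
    Nat.cast_zero, zero_mul, zero_add, sum_mul, mul_sum]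
  refine sum_congr rfl fun i hi => ?_
  have hcount : ((#((matchings N).filter (· j = i)) * (N - 1) : ℕ) : ℝ) = #(matchings N) :=
    congrArg _ (card_matchings_apply_mul (ne_of_mem_erase hi))
  push_cast [Nat.cast_sub j.pos] at hcount
  rw [← hcount]
  ring

theorem sum_matchings_apply_apply_mul_le {j j' : Fin N} (hjj' : j ≠ j') (hN : 3 ≤ N)
    {h : Fin N → Fin N → ℝ} (h0 : ∀ i i', 0 ≤ h i i') (hj : h j' j = 0) :
    (∑ π ∈ matchings N, h (π j) (π j')) * ((N - 1) * (N - 3)) ≤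
      #(matchings N) * ∑ i, ∑ i', h i i' := by
  rw [sum_matchings_apply_apply, sum_mul, mul_sum]
  refine sum_le_sum fun i _ => ?_
  rw [sum_mul, mul_sum]
  refine sum_le_sum fun i' _ => ?_
  by_cases hii' : i = j' ∧ i' = j
  · obtain ⟨rfl, rfl⟩ := hii'
    simp [hj]
  have hcount : ((#((matchings N).filter fun π => π j = i ∧ π j' = i') * ((N - 1) * (N - 3)) :
      ℕ) : ℝ) ≤ #(matchings N) := by
    exact_mod_cast card_matchings_apply_apply_mul_le hjj' hii'
  push_cast [Nat.cast_sub (by omega : 1 ≤ N), Nat.cast_sub hN] at hcount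
  calc _ = (#((matchings N).filter fun π => π j = i ∧ π j' = i') : ℝ) * ((N - 1) * (N - 3)) *
        h i i' := by ring
    _ ≤ _ := mul_le_mul_of_nonneg_right hcount (h0 i i')

section Weights

variable {f : Fin N → Fin N → ℝ} {θ : ℝ}

theorem sum_matchings_sum_apply_mul (hf : ∀ i, f i i = 0) :
    (∑ π ∈ matchings N, ∑ i, f i (π i)) * (N - 1) = #(matchings N) * ∑ i, ∑ j, f i j := by
  rw [sum_comm, sum_mul, mul_sum]
  exact sum_congr rfl fun i _ => by rw [sum_matchings_apply_mul, sum_erase _ (hf i)]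

theorem sum_matchings_mul_apply_le (hN : 3 ≤ N) (hf0 : ∀ i j, 0 ≤ f i j)
    (hfθ : ∀ i j, f i j ≤ θ) (hf : ∀ i j, f i j * f j i = 0) (i i' : Fin N) :
    (∑ π ∈ matchings N, f i (π i) * f i' (π i')) * ((N - 1) * (N - 3)) ≤
      #(matchings N) * ((if i = i' then θ * (N - 3) * ∑ j, f i j else 0) +
        (∑ j, f i j) * ∑ j, f i' j) := by
  have hN3 : (0 : ℝ) ≤ N - 3 := by rw [sub_nonneg]; exact_mod_cast hN
  have hM : (0 : ℝ) ≤ #(matchings N) := Nat.cast_nonneg _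
  rcases eq_or_ne i i' with rfl | hii'
  · have hsq : ∑ j ∈ univ.erase i, f i j * f i j ≤ θ * ∑ j, f i j :=
      calc _ ≤ ∑ j ∈ univ.erase i, θ * f i j :=
            sum_le_sum fun j _ => mul_le_mul_of_nonneg_right (hfθ i j) (hf0 i j)
        _ = _ := by rw [← mul_sum, sum_erase _ (mul_self_eq_zero.1 (hf i i))]
    calc _ = (∑ π ∈ matchings N, f i (π i) * f i (π i)) * (N - 1) * (N - 3) := by ring
      _ = #(matchings N) * (∑ j ∈ univ.erase i, f i j * f i j) * (N - 3) := by
          rw [sum_matchings_apply_mul i fun j => f i j * f i j]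
      _ ≤ #(matchings N) * (θ * ∑ j, f i j) * (N - 3) := by gcongr
      _ ≤ _ := by
          rw [if_pos rfl]
          nlinarith [mul_nonneg hM (mul_self_nonneg (∑ j, f i j))]
  · rw [if_neg hii', zero_add, sum_mul_sum]
    exact sum_matchings_apply_apply_mul_le (h := fun a b => f i a * f i' b) hii' hN
      (fun _ _ => mul_nonneg (hf0 _ _) (hf0 _ _)) (hf i i')

theorem sum_matchings_sq_sum_apply_mul_le (hN : 3 ≤ N) (hf0 : ∀ i j, 0 ≤ f i j)
    (hfθ : ∀ i j, f i j ≤ θ) (hf : ∀ i j, f i j * f j i = 0) :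
    (∑ π ∈ matchings N, (∑ i, f i (π i)) ^ 2) * ((N - 1) * (N - 3)) ≤
      #(matchings N) * (θ * (N - 3) * ∑ i, ∑ j, f i j + (∑ i, ∑ j, f i j) ^ 2) := by
  calc _ = ∑ i, ∑ i', (∑ π ∈ matchings N, f i (π i) * f i' (π i')) * ((N - 1) * (N - 3)) := by
        simp only [sq, sum_mul_sum]
        simp only [sum_mul]
        rw [sum_comm]
        exact sum_congr rfl fun i _ => sum_comm
    _ ≤ ∑ i, ∑ i', #(matchings N) * ((if i = i' then θ * (N - 3) * ∑ j, f i j else 0) +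
          (∑ j, f i j) * ∑ j, f i' j) :=
        sum_le_sum fun i _ => sum_le_sum fun i' _ => sum_matchings_mul_apply_le hN hf0 hfθ hf i i'
    _ = _ := by
        simp only [← mul_sum, sum_add_distrib, sum_ite_eq, mem_univ, if_true, sq, sum_mul_sum]

theorem card_matchings_filter_sum_apply_lt_mul_sq_le (hN : 3 < N) {μ t : ℝ}
    (hf0 : ∀ i j, 0 ≤ f i j) (hfθ : ∀ i j, f i j ≤ θ) (hf : ∀ i j, f i j * f j i = 0) (hμ : μ * (N - 1) = ∑ i, ∑ j, f i j) (ht : 0 ≤ t) :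
    #((matchings N).filter fun π => ∑ i, f i (π i) < μ - t) * t ^ 2 ≤
      #(matchings N) * (θ * μ + 2 * μ ^ 2 / (N - 3)) := by
  have hN1 : (0 : ℝ) < N - 1 := by rw [sub_pos]; exact_mod_cast (by omega : 1 < N)
  have hN3 : (0 : ℝ) < N - 3 := by rw [sub_pos]; exact_mod_cast hN
  refine card_filter_lt_sub_mul_sq_le ?_ ?_ ht
  · refine mul_right_cancel₀ hN1.ne' ?_
    rw [sum_matchings_sum_apply_mul fun i => mul_self_eq_zero.1 (hf i i), ← hμ, mul_assoc]
  · refine le_of_mul_le_mul_right ?_ (mul_pos hN1 hN3)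
    calc _ ≤ _ := sum_matchings_sq_sum_apply_mul_le hN.le hf0 hfθ hf
      _ = _ := by
        rw [← hμ]
        field_simp
        ring

end Weights

def Unbalanced (κ a b : ℝ) : Prop :=
  a = 0 ∨ b = 0 ∨ 2 + κ ^ 2 / 16 ≤ a / b + b / a

noncomputable instance (κ a b : ℝ) : Decidable (Unbalanced κ a b) := instDecidableOr

theorem unbalanced_comm {κ a b : ℝ} : Unbalanced κ a b ↔ Unbalanced κ b a := by
  unfold Unbalanced
  rw [add_comm (a / b)]
  tauto

theorem unbalanced_of_mul_le {κ a b c : ℝ} (hκ : 0 ≤ κ) (hκ1 : κ ≤ 1) (ha : 0 ≤ a)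
    (hc : 1 + κ / 3 ≤ c) (h : c * a ≤ b) : Unbalanced κ a b := by
  rcases ha.eq_or_lt with rfl | ha
  · exact Or.inl rfl
  refine Or.inr (Or.inr ?_)
  have hc0 : 0 < c := by linarith
  calc 2 + κ ^ 2 / 16 ≤ c + c⁻¹ := by
        rw [← sub_nonneg]
        have key : c + c⁻¹ - (2 + κ ^ 2 / 16) = (16 * (c - 1) ^ 2 - κ ^ 2 * c) / (16 * c) := by
          field_simp
          ring
        rw [key]
        refine div_nonneg ?_ (by positivity)
        nlinarith [mul_le_mul hκ1 (show κ ≤ 3 * (c - 1) by linarith) hκ (by linarith)]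
    _ ≤ a / b + b / a := add_inv_le_div_add_div ha (by linarith) h

noncomputable def unbalancedMass (κ : ℝ) (p : Fin N → ℝ) (π : Perm (Fin N)) : ℝ :=
  1 / 2 * ∑ i ∈ univ.filter (fun i => Unbalanced κ (p i) (p (π i))), (p i + p (π i))

theorem unbalancedMass_eq {κ : ℝ} {p : Fin N → ℝ} {π : Perm (Fin N)} (hπ : IsPerfectMatching π) :
    unbalancedMass κ p π = ∑ i ∈ univ.filter (fun i => Unbalanced κ (p i) (p (π i))), p i := by
  have hswap : ∑ i ∈ univ.filter (fun i => Unbalanced κ (p i) (p (π i))), p (π i) =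
      ∑ i ∈ univ.filter (fun i => Unbalanced κ (p i) (p (π i))), p i :=
    sum_equiv π (fun i => by simp [hπ.1, unbalanced_comm]) fun _ _ => rfl
  rw [unbalancedMass, sum_add_distrib, hswap]
  ring

section Distribution

variable {κ θ : ℝ} {p : Fin N → ℝ}

theorem natCast_ne_zero_of_sum_eq_one (hp1 : ∑ i, p i = 1) : (N : ℝ) ≠ 0 := by
  rintro h
  rw [Nat.cast_eq_zero] at h
  subst h
  simp at hp1

theorem half_sum_abs_sub_eq_sum_negPart (hp1 : ∑ i, p i = 1) :
    1 / 2 * ∑ i, |p i - 1 / N| = ∑ i, (p i - 1 / N)⁻ := by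
  refine half_sum_abs_eq_sum_negPart _ ?_
  have hN := natCast_ne_zero_of_sum_eq_one hp1
  rw [sum_sub_distrib, hp1, sum_const, card_univ, Fintype.card_fin, nsmul_eq_mul]
  field_simp
  ring

theorem le_one_of_le_half_sum_abs_sub (hp0 : ∀ i, 0 ≤ p i) (hp1 : ∑ i, p i = 1)
    (hTV : κ ≤ 1 / 2 * ∑ i, |p i - 1 / N|) : κ ≤ 1 := by
  have hN := natCast_ne_zero_of_sum_eq_one hp1
  rw [half_sum_abs_sub_eq_sum_negPart hp1] at hTV
  calc κ ≤ ∑ _i : Fin N, 1 / (N : ℝ) := hTV.trans (sum_le_sum fun i _ => by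
        rw [negPart_def]
        exact sup_le (by linarith [hp0 i]) (by positivity))
    _ = 1 := by
        rw [sum_const, card_univ, Fintype.card_fin, nsmul_eq_mul]
        field_simp

theorem card_matchings_filter_unbalancedMass_lt_of_heavy (hκ : 0 ≤ κ) (hκ1 : κ ≤ 1)
    (hθ : 0 < θ) (hp0 : ∀ i, 0 ≤ p i) (hp1 : ∑ i, p i = 1) (hN : 9 / θ ^ 2 ≤ 2 * (N - 1))
    (hheavy : κ / 12 ≤ ∑ i ∈ univ.filter (θ < p ·), p i) :
    (#((matchings N).filter fun π => unbalancedMass κ p π < κ / 12) : ℝ) ≤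
      2 / 3 * #(matchings N) := by
  set Γ := univ.filter (θ < p ·)
  set Γ' := univ.filter (θ / 3 < p ·)
  have hsub : (matchings N).filter (fun π => unbalancedMass κ p π < κ / 12) ⊆
      (matchings N).filter fun π => ∃ i ∈ Γ, π i ∈ Γ' := by
    intro π hπ
    obtain ⟨hπM, hlt⟩ := mem_filter.1 hπ
    refine mem_filter.2 ⟨hπM, ?_⟩
    by_contra! hlight
    have hΓ : Γ ⊆ univ.filter (fun i => Unbalanced κ (p i) (p (π i))) := fun i hi => by
      have hpi : θ < p i := (mem_filter.1 hi).2
      have hpπi : p (π i) ≤ θ / 3 := not_lt.1 fun h => hlight i hi (mem_filter.2 ⟨mem_univ _, h⟩)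
      exact mem_filter.2 ⟨mem_univ _, unbalanced_comm.1 (unbalanced_of_mul_le (c := 3) hκ hκ1
        (hp0 _) (by linarith) (by linarith))⟩
    have := sum_le_sum_of_subset_of_nonneg hΓ fun i _ _ => hp0 i
    rw [← unbalancedMass_eq (mem_filter.1 hπM).2] at this
    linarith
  have hcount : ((#((matchings N).filter fun π => ∃ i ∈ Γ, π i ∈ Γ') * (N - 1) : ℕ) : ℝ) ≤
      #Γ * #Γ' * #(matchings N) := by
    exact_mod_cast card_matchings_filter_exists_apply_mem_mul_le Γ Γ'
  have hΓ : (#Γ : ℝ) * θ ≤ 1 := hp1 ▸ card_filter_lt_mul_le_sum _ (fun i _ => hp0 i) θ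
  have hΓ' : (#Γ' : ℝ) * (θ / 3) ≤ 1 := hp1 ▸ card_filter_lt_mul_le_sum _ (fun i _ => hp0 i) _
  have hN1 : (0 : ℝ) < N - 1 := by
    have : 0 < 9 / θ ^ 2 := by positivity
    linarith
  push_cast [Nat.cast_sub (show 1 ≤ N by exact_mod_cast (sub_pos.1 hN1).le)] at hcount
  have hprod : (#Γ : ℝ) * #Γ' ≤ 2 / 3 * (N - 1) := by
    have h9 : 9 ≤ 2 * (N - 1) * θ ^ 2 := (div_le_iff₀ (by positivity)).1 hN
    nlinarith [mul_le_mul hΓ hΓ' (by positivity) zero_le_one]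
  refine le_of_mul_le_mul_right ?_ hN1
  calc _ ≤ (#((matchings N).filter fun π => ∃ i ∈ Γ, π i ∈ Γ') : ℝ) * (N - 1) := by
        gcongr
    _ ≤ #Γ * #Γ' * #(matchings N) := hcount
    _ ≤ 2 / 3 * (N - 1) * #(matchings N) := by gcongr
    _ = _ := by ring

noncomputable def unbalancedWeight (κ θ : ℝ) (p : Fin N → ℝ) (i j : Fin N) : ℝ :=
  if (1 + κ / 3) * p j ≤ p i ∧ p i ≤ θ then p i else 0

theorem unbalancedWeight_nonneg (hp0 : ∀ i, 0 ≤ p i) (i j : Fin N) :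
    0 ≤ unbalancedWeight κ θ p i j := by
  unfold unbalancedWeight; split_ifs <;> simp [hp0]

theorem unbalancedWeight_le_apply (hp0 : ∀ i, 0 ≤ p i) (i j : Fin N) :
    unbalancedWeight κ θ p i j ≤ p i := by
  unfold unbalancedWeight; split_ifs <;> simp [hp0]

theorem unbalancedWeight_le (hθ : 0 ≤ θ) (i j : Fin N) : unbalancedWeight κ θ p i j ≤ θ := by
  unfold unbalancedWeight; split_ifs with h
  exacts [h.2, hθ]

theorem unbalancedWeight_mul_swap (hκ : 0 < κ) (hp0 : ∀ i, 0 ≤ p i) (i j : Fin N) :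
    unbalancedWeight κ θ p i j * unbalancedWeight κ θ p j i = 0 := by
  unfold unbalancedWeight
  split_ifs with hij hji
  · have : p i = 0 := by nlinarith [hp0 i, hp0 j]
    simp [this]
  all_goals simp

theorem sum_unbalancedWeight_le_unbalancedMass (hκ : 0 ≤ κ) (hκ1 : κ ≤ 1)
    (hp0 : ∀ i, 0 ≤ p i) {π : Perm (Fin N)} (hπ : IsPerfectMatching π) :
    ∑ i, unbalancedWeight κ θ p i (π i) ≤ unbalancedMass κ p π := by
  rw [unbalancedMass_eq hπ, sum_filter]
  refine sum_le_sum fun i _ => ?_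
  unfold unbalancedWeight
  split_ifs with h hU hU
  · exact le_rfl
  · exact absurd (unbalanced_comm.1 (unbalanced_of_mul_le hκ hκ1 (hp0 _) le_rfl h.1)) hU
  · exact hp0 i
  · exact le_rfl

theorem one_sub_mul_le_sum_unbalancedWeight (hκ : 0 ≤ κ) (hp0 : ∀ i, 0 ≤ p i)
    (hp1 : ∑ i, p i = 1) (j : Fin N) :
    1 - N * p j ≤ ∑ i, unbalancedWeight κ θ p i j + ∑ i ∈ univ.filter (θ < p ·), p i +
      κ / 3 * N * p j := by
  have hterm : ∀ i, p i - p j ≤ unbalancedWeight κ θ p i j + (if θ < p i then p i else 0) +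
      κ / 3 * p j := fun i => by
    unfold unbalancedWeight
    have hpi := hp0 i
    have hpj := hp0 j
    have : 0 ≤ κ / 3 * p j := mul_nonneg (by positivity) hpj
    split_ifs with h1 h2 h2 <;> try linarith
    simp only [not_and, not_lt] at h1 h2
    have : p i < (1 + κ / 3) * p j := lt_of_not_ge fun h => h1 h h2
    linarith
  calc 1 - N * p j = ∑ i, (p i - p j) := by
        rw [sum_sub_distrib, hp1, sum_const, card_univ, Fintype.card_fin, nsmul_eq_mul]
    _ ≤ _ := sum_le_sum fun i _ => hterm i
    _ = _ := by
        rw [sum_add_distrib, sum_add_distrib, ← sum_filter, sum_const, card_univ,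
          Fintype.card_fin, nsmul_eq_mul]
        ring

theorem mul_le_sum_sum_unbalancedWeight (hκ : 0 ≤ κ) (hp0 : ∀ i, 0 ≤ p i) (hp1 : ∑ i, p i = 1)
    (hTV : κ ≤ 1 / 2 * ∑ i, |p i - 1 / N|) :
    (2 * κ / 3 - ∑ i ∈ univ.filter (θ < p ·), p i) * N ≤ ∑ i, ∑ j, unbalancedWeight κ θ p i j := by
  set G := ∑ i ∈ univ.filter (θ < p ·), p i
  have hN : (0 : ℝ) < N := (Nat.cast_nonneg N).lt_of_ne (natCast_ne_zero_of_sum_eq_one hp1).symm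
  have hG : 0 ≤ G := sum_nonneg fun i _ => hp0 i
  have hdeficit : ∀ j, (p j - 1 / N)⁻ * N ≤
      ∑ i, unbalancedWeight κ θ p i j + G + κ / 3 * N * p j := fun j => by
    have hw : 0 ≤ ∑ i, unbalancedWeight κ θ p i j :=
      sum_nonneg fun i _ => unbalancedWeight_nonneg hp0 i j
    have : 0 ≤ κ / 3 * N * p j := by have := hp0 j; positivity
    rw [negPart_def, max_mul_of_nonneg _ _ hN.le, zero_mul]
    refine max_le ?_ (by linarith)
    have h1 := one_sub_mul_le_sum_unbalancedWeight (θ := θ) hκ hp0 hp1 j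
    calc -(p j - 1 / N) * N = 1 - N * p j := by field_simp; ring
      _ ≤ _ := h1
  rw [half_sum_abs_sub_eq_sum_negPart hp1] at hTV
  have htotal : κ * N ≤ ∑ i, ∑ j, unbalancedWeight κ θ p i j + N * G + κ / 3 * N :=
    calc κ * N ≤ ∑ j, (p j - 1 / N)⁻ * N := by rw [← sum_mul]; gcongr
      _ ≤ ∑ j, (∑ i, unbalancedWeight κ θ p i j + G + κ / 3 * N * p j) :=
          sum_le_sum fun j _ => hdeficit j
      _ = _ := by
        rw [sum_add_distrib, sum_add_distrib, sum_comm, ← mul_sum, hp1, sum_const, card_univ,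
          Fintype.card_fin, nsmul_eq_mul]
        ring
  linarith

theorem card_matchings_filter_unbalancedMass_lt_of_light (hκ : 0 < κ) (hκ1 : κ ≤ 1)
    (hθ : 0 ≤ θ) (hp0 : ∀ i, 0 ≤ p i) (hp1 : ∑ i, p i = 1)
    (hTV : κ ≤ 1 / 2 * ∑ i, |p i - 1 / N|) (hN : 3 < N)
    (hvar : 2 * θ + 8 / (N - 3) ≤ 2 / 3 * (κ / 2) ^ 2)
    (hlight : ∑ i ∈ univ.filter (θ < p ·), p i < κ / 12) :
    (#((matchings N).filter fun π => unbalancedMass κ p π < κ / 12) : ℝ) ≤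
      2 / 3 * #(matchings N) := by
  set R := ∑ i, ∑ j, unbalancedWeight κ θ p i j
  have hN1 : (0 : ℝ) < N - 1 := by rw [sub_pos]; exact_mod_cast (by omega : 1 < N)
  have hN3 : (0 : ℝ) < N - 3 := by rw [sub_pos]; exact_mod_cast hN
  have hRlo : 7 * κ / 12 * N ≤ R := by
    nlinarith [mul_le_sum_sum_unbalancedWeight (θ := θ) hκ.le hp0 hp1 hTV]
  have hRhi : R ≤ N :=
    calc R ≤ ∑ i, ∑ _j : Fin N, p i :=
          sum_le_sum fun i _ => sum_le_sum fun j _ => unbalancedWeight_le_apply hp0 i j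
      _ = N := by
          simp only [sum_const, card_univ, Fintype.card_fin, nsmul_eq_mul, ← mul_sum, hp1, mul_one]
  set μ := R / (N - 1)
  have hμ : μ * (N - 1) = R := div_mul_cancel₀ _ hN1.ne'
  have hμlo : 7 * κ / 12 ≤ μ := by rw [le_div_iff₀ hN1]; nlinarith
  have hμhi : μ ≤ 2 := by rw [div_le_iff₀ hN1]; linarith
  have hsub : (matchings N).filter (fun π => unbalancedMass κ p π < κ / 12) ⊆
      (matchings N).filter fun π => ∑ i, unbalancedWeight κ θ p i (π i) < μ - κ / 2 := by
    refine monotone_filter_right _ fun π hπ hlt => ?_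
    have := sum_unbalancedWeight_le_unbalancedMass (θ := θ) hκ.le hκ1 hp0 (mem_filter.1 hπ).2
    linarith
  have hcheb := card_matchings_filter_sum_apply_lt_mul_sq_le hN (unbalancedWeight_nonneg hp0)
    (unbalancedWeight_le hθ) (unbalancedWeight_mul_swap hκ hp0) hμ (by positivity : 0 ≤ κ / 2)
  refine le_of_mul_le_mul_right ?_ (by positivity : (0 : ℝ) < (κ / 2) ^ 2)
  calc _ ≤ (#((matchings N).filter fun π => ∑ i, unbalancedWeight κ θ p i (π i) < μ - κ / 2) :
          ℝ) * (κ / 2) ^ 2 := by gcongr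
    _ ≤ #(matchings N) * (θ * μ + 2 * μ ^ 2 / (N - 3)) := hcheb
    _ ≤ #(matchings N) * (θ * 2 + 2 * 2 ^ 2 / (N - 3)) := by
        have : 0 ≤ μ := by linarith
        gcongr
    _ ≤ _ := by nlinarith [mul_le_mul_of_nonneg_left hvar (Nat.cast_nonneg #(matchings N))]

end Distribution

theorem thresholds_of_le_mul_pow_four {κ : ℝ} (hκ : 0 < κ) (hκ1 : κ ≤ 1)
    (hN : 10 ^ 4 ≤ N * κ ^ 4) :
    3 < N ∧ 9 / (κ ^ 2 / 16) ^ 2 ≤ 2 * ((N : ℝ) - 1) ∧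
      2 * (κ ^ 2 / 16) + 8 / ((N : ℝ) - 3) ≤ 2 / 3 * (κ / 2) ^ 2 := by
  have hκ4 : κ ^ 4 ≤ κ ^ 2 := pow_le_pow_of_le_one hκ.le hκ1 (by norm_num)
  have hκ2 : κ ^ 2 ≤ 1 := pow_le_one₀ hκ.le hκ1
  have hN3 : (3 : ℝ) < N := by nlinarith [pow_pos hκ 4]
  refine ⟨by exact_mod_cast hN3, ?_, ?_⟩
  · rw [div_le_iff₀ (by positivity)]
    nlinarith
  · have : 8 / ((N : ℝ) - 3) ≤ κ ^ 2 / 24 := by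
      rw [div_le_iff₀ (by linarith)]
      nlinarith
    linarith

/-- for every κ > 0 and all sufficiently large even N, if (p_1,…,p_N) is a
probability distribution with (1/2)∑|p_i − 1/N| ≥ κ, then for at least a 1/3 fraction of
perfect matchings M of [N], the edges (i,j) ∈ M with p_i/p_j + p_j/p_i ≥ 2 + κ²/16
(stipulated to hold when p_i = 0 or p_j = 0) carry total weight ∑ (p_i + p_j) ≥ κ/12.
(Each edge {i, π i} is counted twice in the sum over i, whence the factor 1/2.) -/
theorem unbalanced_edges_distribution (κ : ℝ) (hκ : 0 < κ) :
    ∃ N₀ : ℕ, ∀ N : ℕ, N₀ ≤ N → Even N →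
      ∀ p : Fin N → ℝ, (∀ i, 0 ≤ p i) → (∑ i, p i = 1) →
        κ ≤ (1 / 2) * ∑ i, |p i - 1 / N| →
        ((univ.filter (fun π : Equiv.Perm (Fin N) => IsPerfectMatching π)).card : ℝ) ≤
          3 * ((univ.filter (fun π : Equiv.Perm (Fin N) => IsPerfectMatching π ∧
            κ / 12 ≤ (1 / 2) * ∑ i ∈ univ.filter (fun i =>
                p i = 0 ∨ p (π i) = 0 ∨
                  2 + κ ^ 2 / 16 ≤ p i / p (π i) + p (π i) / p i),
              (p i + p (π i)))).card) := by
  refine ⟨⌈10 ^ 4 / κ ^ 4⌉₊, fun N hN _ p hp0 hp1 hTV => ?_⟩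
  have hκ1 : κ ≤ 1 := le_one_of_le_half_sum_abs_sub hp0 hp1 hTV
  obtain ⟨hN3, hheavy, hlight⟩ := thresholds_of_le_mul_pow_four hκ hκ1
    ((div_le_iff₀ (by positivity)).1 (Nat.ceil_le.1 hN))
  have hbad : (#((matchings N).filter fun π => unbalancedMass κ p π < κ / 12) : ℝ) ≤
      2 / 3 * #(matchings N) := by
    rcases le_or_gt (κ / 12) (∑ i ∈ univ.filter (κ ^ 2 / 16 < p ·), p i) with hG | hG
    · exact card_matchings_filter_unbalancedMass_lt_of_heavy hκ.le hκ1 (by positivity) hp0 hp1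
        hheavy hG
    · exact card_matchings_filter_unbalancedMass_lt_of_light hκ hκ1 (by positivity) hp0 hp1 hTV
        hN3 hlight hG
  change (#(matchings N) : ℝ) ≤ 3 * #(univ.filter fun π =>
    IsPerfectMatching π ∧ κ / 12 ≤ unbalancedMass κ p π)
  rw [← filter_filter]
  exact card_le_three_mul_card_filter_le hbad
end

section
/- Let (p_1,…,p_N) be a probability distribution on [N], and let κ := (1/2)∑_{i=1}^N |p_i − 1/N|. Let L* be the set of indices i ∈ [N] such that p_i ≤ (1 − κ/4)/N. Then |L*| ≥ κN/2. -/
open Finset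

/-!
Since the `p i - 1/N` sum to zero, `κ` equals the total deficit `∑ (p i - 1/N)⁻`. An index
outside `L*` contributes less than `κ/(4N)` to it and an index of `L*` at most `1/N`, so
`κ ≤ |L*|/N + κ/4`, i.e. `|L*| ≥ 3κN/4`.
-/

theorem Finset.sum_abs_eq_two_mul_sum_negPart {ι : Type*} (s : Finset ι) (f : ι → ℝ)
    (hf : ∑ i ∈ s, f i = 0) : ∑ i ∈ s, |f i| = 2 * ∑ i ∈ s, (f i)⁻ := by
  have habs : ∀ x : ℝ, |x| = x + 2 * x⁻ := fun x => by
    linarith [posPart_add_negPart x, posPart_sub_negPart x]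
  rw [sum_congr rfl fun i _ => habs (f i), sum_add_distrib, hf, mul_sum, zero_add]

theorem sum_negPart_sub_le {ι : Type*} [Fintype ι] (p : ι → ℝ) (hp : ∀ i, 0 ≤ p i)
    {u c : ℝ} (hu : 0 ≤ u) (hcu : c ≤ u) :
    ∑ i, (p i - u)⁻ ≤ u * #{i | p i ≤ c} + (u - c) * Fintype.card ι := by
  have hlight : ∑ i with p i ≤ c, (p i - u)⁻ ≤ #{i | p i ≤ c} * u := by
    rw [← nsmul_eq_mul]
    refine sum_le_card_nsmul _ _ _ fun i _ => ?_
    rw [negPart_def]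
    exact max_le (by linarith [hp i]) hu
  have hheavy : ∑ i with ¬ p i ≤ c, (p i - u)⁻ ≤ #{i | ¬ p i ≤ c} * (u - c) := by
    rw [← nsmul_eq_mul]
    refine sum_le_card_nsmul _ _ _ fun i hi => ?_
    rw [mem_filter, not_le] at hi
    rw [negPart_def]
    exact max_le (by linarith) (by linarith)
  have hcard : (#{i | ¬ p i ≤ c} : ℝ) ≤ Fintype.card ι := by
    exact_mod_cast card_filter_le _ _
  rw [← sum_filter_add_sum_filter_not univ (fun i => p i ≤ c)]
  linarith [mul_le_mul_of_nonneg_left hcard (sub_nonneg.mpr hcu)]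

/-- with κ := (1/2)∑|p_i − 1/N|, the set L* of "very light" indices
(those with p_i ≤ (1 − κ/4)/N) has size at least κN/2. -/
theorem very_light_elements {N : ℕ} (p : Fin N → ℝ)
    (hp : ∀ i, 0 ≤ p i) (hsum : ∑ i, p i = 1)
    (κ : ℝ) (hκ : κ = (1 / 2) * ∑ i, |p i - 1 / N|) :
    κ * N / 2 ≤ ((univ.filter (fun i : Fin N => p i ≤ (1 - κ / 4) / N)).card : ℝ) := by
  rcases Nat.eq_zero_or_pos N with rfl | hN
  · simp at hsum
  have hN' : (0 : ℝ) < N := by exact_mod_cast hN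
  have hκ_nonneg : 0 ≤ κ := by rw [hκ]; positivity
  have hκ_deficit : κ = ∑ i, (p i - 1 / N)⁻ := by
    have hcentered : ∑ i, (p i - 1 / N) = 0 := by
      simp [sum_sub_distrib, hsum, hN'.ne']
    rw [hκ, sum_abs_eq_two_mul_sum_negPart _ _ hcentered]
    ring
  have hbound := sum_negPart_sub_le p hp (u := 1 / N) (c := (1 - κ / 4) / N) (by positivity)
    (by gcongr; linarith)
  have hdefect : (1 / N - (1 - κ / 4) / N) * N = κ / 4 := by field_simp; ring
  rw [← hκ_deficit, Fintype.card_fin, hdefect, one_div_mul_eq_div] at hbound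
  have hlight : 3 * κ / 4 * N ≤ #{i | p i ≤ (1 - κ / 4) / N} :=
    (le_div_iff₀ hN').mp (by linarith)
  linarith [mul_nonneg hκ_nonneg hN'.le]
end

section
/- Let (p_1,…,p_N) be a probability distribution on [N], and let κ := (1/2)∑_{i=1}^N |p_i − 1/N|. Let H* be the set of indices i ∈ [N] such that p_i ≥ (1 + κ/2)/N. Then ∑_{i ∈ H*} p_i ≥ κ/2. -/
/-!
Put `f i = p i - 1/N`. Since `∑ f i = 0`, the distance `κ = ½ ∑ |f i|` equals the total positive
excess `∑ (f i)⁺`. An index outside `H*` has excess below `κ/(2N)`, so these contribute at most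
`κ/2` in total, while an index in `H*` contributes at most its own mass `p i`.
-/

open Finset

theorem Finset.sum_abs_eq_two_nsmul_sum_posPart {ι α : Type*} [Lattice α] [AddCommGroup α]
    [AddLeftMono α] (s : Finset ι) (f : ι → α) (hf : ∑ i ∈ s, f i = 0) :
    ∑ i ∈ s, |f i| = 2 • ∑ i ∈ s, (f i)⁺ := by
  rw [smul_sum, ← sum_congr rfl fun i _ => abs_add_eq_two_nsmul_posPart (f i), sum_add_distrib,
    hf, add_zero]

theorem sum_posPart_sub_le_card_nsmul_add_sum_filter_le {ι α : Type*} [Fintype ι]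
    [AddCommGroup α] [LinearOrder α] [IsOrderedAddMonoid α] (p : ι → α) (hp : ∀ i, 0 ≤ p i)
    {u t : α} (hu : 0 ≤ u) (hut : u ≤ t) :
    ∑ i, (p i - u)⁺ ≤ Fintype.card ι • (t - u) + ∑ i ∈ univ.filter (fun i => t ≤ p i), p i := by
  rw [sum_filter, ← card_univ, ← sum_const, ← sum_add_distrib]
  refine sum_le_sum fun i _ => ?_
  have hδ : 0 ≤ t - u := sub_nonneg.2 hut
  split_ifs with hti
  · exact sup_le (le_add_of_nonneg_of_le hδ (sub_le_self _ hu)) (add_nonneg hδ (hp i))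
  · rw [add_zero]
    exact sup_le (sub_le_sub_right (not_le.1 hti).le u) hδ

/-- with κ := (1/2)∑|p_i − 1/N|, the set H* of "very heavy" indices
(those with p_i ≥ (1 + κ/2)/N) has total weight at least κ/2. -/
theorem very_heavy_elements {N : ℕ} (p : Fin N → ℝ)
    (hp : ∀ i, 0 ≤ p i) (hsum : ∑ i, p i = 1)
    (κ : ℝ) (hκ : κ = (1 / 2) * ∑ i, |p i - 1 / N|) :
    κ / 2 ≤ ∑ i ∈ univ.filter (fun i : Fin N => (1 + κ / 2) / N ≤ p i), p i := by
  have hN : (N : ℝ) ≠ 0 := by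
    rintro hN
    obtain rfl := Nat.cast_eq_zero.1 hN
    simp at hsum
  have hκ_pos : κ = ∑ i, (p i - 1 / N)⁺ := by
    have hcentered : ∑ i, (p i - 1 / N) = 0 := by simp [sum_sub_distrib, hsum, hN]
    rw [hκ, sum_abs_eq_two_nsmul_sum_posPart _ _ hcentered, two_nsmul]
    ring
  have hκ_nonneg : 0 ≤ κ := hκ_pos ▸ sum_nonneg fun i _ => posPart_nonneg _
  have hheavy := sum_posPart_sub_le_card_nsmul_add_sum_filter_le p hp (u := 1 / N)
    (t := (1 + κ / 2) / N) (by positivity) (by gcongr; linarith)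
  have hlight : Fintype.card (Fin N) • ((1 + κ / 2) / N - 1 / N) = κ / 2 := by
    rw [Fintype.card_fin, nsmul_eq_mul]
    field_simp
    ring
  linarith
end

section
/- Let |φ⟩ = α_1|1⟩ + ⋯ + α_N|N⟩ ∈ ℂ^N be a unit vector, and suppose |φ⟩ is ε-far in trace distance from every proper state, for some ε > 0. Then imp(|φ⟩) > ε². -/
/-- `|φ⟩` is ε-far in trace distance from every proper state
`(1/√N) ∑ (−1)^{x_i} |i⟩`, where the trace distance between pure states is
`√(1 − |⟨φ|ψ⟩|²)`. -/
def FarFromProper {N : ℕ} (α : Fin N → ℂ) (ε : ℝ) : Prop :=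
  ∀ x : Fin N → Bool,
    ε ≤ Real.sqrt (1 - ‖∑ i, (starRingEnd ℂ) (α i) *
      ((if x i then -1 else 1) / (Real.sqrt N : ℂ))‖ ^ 2)

/-- The impropriety of `|φ⟩ = ∑ α_i |i⟩`: the infimum over complex numbers `r` with
`|r| = 1/N` of `∑ |α_i² − r|`. -/
noncomputable def impropriety {N : ℕ} (α : Fin N → ℂ) : ℝ :=
  sInf {t | ∃ r : ℂ, ‖r‖ = 1 / N ∧ t = ∑ i, ‖α i ^ 2 - r‖}

/-!
Write `r = s²` with `|s| = 1/√N`. Since `|a² − s²| = |a − s| |a + s| ≥ |a|² + |s|² − 2 |Re(ā s)|`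
(the smaller of the two factors squared), summing gives `∑ |α_i² − r| ≥ 2 − 2 ∑ |Re(ᾱ_i s)|`.
Taking the signs `x_i` of `Re(ᾱ_i s)` bounds the last sum by the overlap `|⟨φ|ψ_x⟩|` with a proper
state, which is at most `√(1 − ε²)`; and `2 − 2√(1 − ε²) > ε²` because `(1 − √(1 − ε²))² > 0`.
-/

open Finset ComplexConjugate

section RCLike

variable {𝕜 : Type*} [RCLike 𝕜]

lemma norm_sub_sq_le_norm_sq_sub_sq {a s : 𝕜} (h : 0 ≤ RCLike.re (conj a * s)) :
    ‖a - s‖ ^ 2 ≤ ‖a ^ 2 - s ^ 2‖ := by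
  have hsub := norm_sub_sq (𝕜 := 𝕜) a s
  have hadd := norm_add_sq (𝕜 := 𝕜) a s
  rw [RCLike.inner_apply'] at hsub hadd
  have hle : ‖a - s‖ ≤ ‖a + s‖ :=
    (pow_le_pow_iff_left₀ (norm_nonneg _) (norm_nonneg _) two_ne_zero).mp (by linarith)
  calc ‖a - s‖ ^ 2 ≤ ‖a - s‖ * ‖a + s‖ := by
        rw [sq]; exact mul_le_mul_of_nonneg_left hle (norm_nonneg _)
    _ = ‖a ^ 2 - s ^ 2‖ := by rw [← norm_mul]; ring_nf

lemma norm_sq_add_norm_sq_sub_abs_re_le_norm_sq_sub_sq (a s : 𝕜) :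
    ‖a‖ ^ 2 + ‖s‖ ^ 2 - 2 * |RCLike.re (conj a * s)| ≤ ‖a ^ 2 - s ^ 2‖ := by
  rcases le_or_gt 0 (RCLike.re (conj a * s)) with h | h
  · have := norm_sub_sq_le_norm_sq_sub_sq h
    rw [norm_sub_sq (𝕜 := 𝕜), RCLike.inner_apply'] at this
    rw [abs_of_nonneg h]; linarith
  · have h' : 0 ≤ RCLike.re (conj a * -s) := by rw [mul_neg, map_neg]; linarith
    have := norm_sub_sq_le_norm_sq_sub_sq h'
    rw [norm_sub_sq (𝕜 := 𝕜), RCLike.inner_apply', norm_neg, neg_sq, mul_neg, map_neg] at this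
    rw [abs_of_neg h]; linarith

end RCLike

lemma exists_sum_abs_re_le_norm_sum_signs {ι : Type*} [Fintype ι] (β : ι → ℂ) :
    ∃ x : ι → Bool, ∑ i, |(β i).re| ≤ ‖∑ i, (if x i then -1 else 1) * β i‖ := by
  refine ⟨fun i => decide ((β i).re < 0), ?_⟩
  calc ∑ i, |(β i).re| = (∑ i, (if (β i).re < 0 then -1 else 1) * β i).re := by
        rw [Complex.re_sum]
        refine sum_congr rfl fun i _ => ?_
        split_ifs with h
        · simp [abs_of_neg h]
        · simp [abs_of_nonneg (not_lt.mp h)]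
    _ ≤ _ := by simpa only [decide_eq_true_eq] using Complex.re_le_norm _

/-- `|⟨φ|ψ_x⟩|`, where `ψ_x` is the proper state with signs `(−1)^{x_i}`. -/
noncomputable def properOverlap {N : ℕ} (α : Fin N → ℂ) (x : Fin N → Bool) : ℝ :=
  ‖∑ i, conj (α i) * ((if x i then -1 else 1) / (Real.sqrt N : ℂ))‖

lemma FarFromProper.sq_le_one_sub_properOverlap_sq {N : ℕ} {α : Fin N → ℂ} {ε : ℝ}
    (hε : 0 < ε) (hfar : FarFromProper α ε) (x : Fin N → Bool) :
    ε ^ 2 ≤ 1 - properOverlap α x ^ 2 :=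
  (Real.le_sqrt' hε).mp (hfar x)

lemma FarFromProper.properOverlap_le {N : ℕ} {α : Fin N → ℂ} {ε : ℝ}
    (hε : 0 < ε) (hfar : FarFromProper α ε) (x : Fin N → Bool) :
    properOverlap α x ≤ Real.sqrt (1 - ε ^ 2) :=
  Real.le_sqrt_of_sq_le (by linarith [hfar.sq_le_one_sub_properOverlap_sq hε x])

lemma norm_sum_signs_mul_eq_properOverlap {N : ℕ} (α : Fin N → ℂ) (x : Fin N → Bool) {s : ℂ}
    (hs : ‖s‖ * Real.sqrt N = 1) :
    ‖∑ i, (if x i then -1 else 1) * (conj (α i) * s)‖ = properOverlap α x := by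
  have hN : (Real.sqrt N : ℂ) ≠ 0 := by
    rintro h
    rw [Complex.ofReal_eq_zero.mp h, mul_zero] at hs
    exact zero_ne_one hs
  have hfactor : ∑ i, (if x i then -1 else 1) * (conj (α i) * s) =
      ((Real.sqrt N : ℂ) * s) *
        ∑ i, conj (α i) * ((if x i then -1 else 1) / (Real.sqrt N : ℂ)) := by
    rw [mul_sum]
    refine sum_congr rfl fun i _ => ?_
    field_simp
  rw [hfactor, norm_mul, norm_mul, Complex.norm_real, Real.norm_of_nonneg (Real.sqrt_nonneg _),
    mul_comm (Real.sqrt N), hs, one_mul, properOverlap]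

lemma exists_two_sub_two_mul_properOverlap_le {N : ℕ} {α : Fin N → ℂ}
    (hα : ∑ i, ‖α i‖ ^ 2 = 1) {r : ℂ} (hr : ‖r‖ = 1 / N) :
    ∃ x, 2 - 2 * properOverlap α x ≤ ∑ i, ‖α i ^ 2 - r‖ := by
  have hN : (N : ℝ) ≠ 0 := Nat.cast_ne_zero.mpr <| by
    rintro rfl
    simp at hα
  obtain ⟨s, rfl⟩ := IsAlgClosed.exists_pow_nat_eq r two_pos
  have hs : ‖s‖ ^ 2 = 1 / N := by rw [← norm_pow, hr]
  have hsN : ‖s‖ * Real.sqrt N = 1 := by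
    rw [← Real.sqrt_sq (norm_nonneg s), hs, ← Real.sqrt_mul (by positivity),
      one_div_mul_cancel hN, Real.sqrt_one]
  obtain ⟨x, hx⟩ := exists_sum_abs_re_le_norm_sum_signs fun i => conj (α i) * s
  refine ⟨x, ?_⟩
  rw [← norm_sum_signs_mul_eq_properOverlap α x hsN]
  calc 2 - 2 * ‖∑ i, (if x i then -1 else 1) * (conj (α i) * s)‖
      ≤ ∑ i, (‖α i‖ ^ 2 + ‖s‖ ^ 2 - 2 * |(conj (α i) * s).re|) := by
        rw [sum_sub_distrib, sum_add_distrib, ← mul_sum, hα, sum_const, card_univ,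
          Fintype.card_fin, nsmul_eq_mul, hs, mul_one_div_cancel hN]
        linarith
    _ ≤ ∑ i, ‖α i ^ 2 - s ^ 2‖ :=
        sum_le_sum fun i _ => norm_sq_add_norm_sq_sub_abs_re_le_norm_sq_sub_sq (α i) s

lemma sq_lt_two_sub_two_mul_sqrt_one_sub_sq {ε : ℝ} (hε : 0 < ε) (hε1 : ε ^ 2 ≤ 1) :
    ε ^ 2 < 2 - 2 * Real.sqrt (1 - ε ^ 2) := by
  have hu := Real.sq_sqrt (sub_nonneg.mpr hε1)
  have hu1 : Real.sqrt (1 - ε ^ 2) < 1 := by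
    rw [Real.sqrt_lt' one_pos]; nlinarith
  nlinarith [sq_pos_of_pos (sub_pos.mpr hu1)]

/-- if the unit vector |φ⟩ is ε-far from every proper state, then
imp(|φ⟩) > ε². -/
theorem impropriety_of_far {N : ℕ} (α : Fin N → ℂ) (hα : ∑ i, ‖α i‖ ^ 2 = 1)
    (ε : ℝ) (hε : 0 < ε) (hfar : FarFromProper α ε) :
    ε ^ 2 < impropriety α := by
  have hε1 : ε ^ 2 ≤ 1 := by
    nlinarith [hfar.sq_le_one_sub_properOverlap_sq hε fun _ => false]
  calc ε ^ 2 < 2 - 2 * Real.sqrt (1 - ε ^ 2) := sq_lt_two_sub_two_mul_sqrt_one_sub_sq hε hε1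
    _ ≤ impropriety α := by
      refine le_csInf ⟨_, 1 / N, by simp, rfl⟩ ?_
      rintro t ⟨r, hr, rfl⟩
      obtain ⟨x, hx⟩ := exists_two_sub_two_mul_properOverlap_le hα hr
      linarith [hfar.properOverlap_le hε x]
end

section
/- Let |φ⟩ = α_1|1⟩ + ⋯ + α_N|N⟩ ∈ ℂ^N be a unit vector with NU(|φ⟩) ≤ ε⁴/100 and imp(|φ⟩) ≥ ε², where ε > 0. Let δ := ε²/5, let U be the set of indices i ∈ [N] such that | |α_i|² − 1/N | ≤ δ/N, and let imp_U(|φ⟩) := min over complex numbers r with |r| = 1/N of ∑_{i ∈ U} |α_i² − r|. Then imp_U(|φ⟩) ≥ 3ε²/5. -/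
open Finset

/-- The impropriety of `|φ⟩` restricted to a set `U` of indices. -/
noncomputable def improprietyOn {N : ℕ} (α : Fin N → ℂ) (U : Finset (Fin N)) : ℝ :=
  sInf {t | ∃ r : ℂ, ‖r‖ = 1 / N ∧ t = ∑ i ∈ U, ‖α i ^ 2 - r‖}

/-- if NU(|φ⟩) ≤ ε⁴/100 and imp(|φ⟩) ≥ ε², then with δ := ε²/5 and
U = { i : | |α_i|² − 1/N | ≤ δ/N }, we have imp_U(|φ⟩) ≥ 3ε²/5. -/
theorem impropriety_on_uniform_subset {N : ℕ} (α : Fin N → ℂ)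
    (hα : ∑ i, ‖α i‖ ^ 2 = 1) (ε : ℝ) (hε : 0 < ε)
    (hNU : (1 / 2) * ∑ i, |‖α i‖ ^ 2 - 1 / N| ≤ ε ^ 4 / 100)
    (himp : ε ^ 2 ≤ impropriety α) :
    3 * ε ^ 2 / 5 ≤
      improprietyOn α (univ.filter (fun i : Fin N => |‖α i‖ ^ 2 - 1 / N| ≤ (ε ^ 2 / 5) / N)) := by
  have hN : 0 < N := by
    rcases Nat.eq_zero_or_pos N with h | h
    · subst h; simp at hα
    · exact h
  have hNR : (0:ℝ) < N := by exact_mod_cast hN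
  have hr0 : ‖((1/N : ℝ) : ℂ)‖ = 1 / N := by
    rw [Complex.norm_real]; exact abs_of_nonneg (by positivity)
  have hbdd : ∀ (S : Finset (Fin N)),
      BddBelow {t | ∃ r : ℂ, ‖r‖ = 1 / N ∧ t = ∑ i ∈ S, ‖α i ^ 2 - r‖} := by
    intro S
    exact ⟨0, by rintro t ⟨r, -, rfl⟩; exact Finset.sum_nonneg fun i _ => norm_nonneg _⟩
  -- bound on full sums for any admissible r
  have hsum2 : ∀ r : ℂ, ‖r‖ = 1 / N → ∑ i, ‖α i ^ 2 - r‖ ≤ 2 := by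
    intro r hr
    calc ∑ i, ‖α i ^ 2 - r‖ ≤ ∑ i, (‖α i‖ ^ 2 + 1 / N) := by
          refine Finset.sum_le_sum fun i _ => ?_
          calc ‖α i ^ 2 - r‖ ≤ ‖α i ^ 2‖ + ‖r‖ := norm_sub_le _ _
            _ = ‖α i‖ ^ 2 + 1 / N := by rw [norm_pow, hr]
      _ = (∑ i, ‖α i‖ ^ 2) + (N : ℝ) * (1 / N) := by
          rw [Finset.sum_add_distrib, Finset.sum_const, Finset.card_univ, Fintype.card_fin,
            nsmul_eq_mul]
      _ = 2 := by rw [hα]; field_simp; norm_num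
  have hε2 : ε ^ 2 ≤ 2 := by
    refine himp.trans (le_trans (csInf_le (hbdd univ) ⟨_, hr0, rfl⟩) (hsum2 _ hr0))
  rw [improprietyOn]
  refine le_csInf ⟨_, ⟨_, hr0, rfl⟩⟩ ?_
  rintro t ⟨r, hr, rfl⟩
  set U : Finset (Fin N) :=
    univ.filter (fun i : Fin N => |‖α i‖ ^ 2 - 1 / N| ≤ (ε ^ 2 / 5) / N) with hU
  set V : Finset (Fin N) :=
    univ.filter (fun i : Fin N => ¬ |‖α i‖ ^ 2 - 1 / N| ≤ (ε ^ 2 / 5) / N) with hV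
  have hsplit : ∑ i ∈ U, ‖α i ^ 2 - r‖ + ∑ i ∈ V, ‖α i ^ 2 - r‖ = ∑ i, ‖α i ^ 2 - r‖ :=
    Finset.sum_filter_add_sum_filter_not univ _ _
  have hfull : ε ^ 2 ≤ ∑ i, ‖α i ^ 2 - r‖ :=
    himp.trans (csInf_le (hbdd univ) ⟨r, hr, rfl⟩)
  set T : ℝ := ∑ i, |‖α i‖ ^ 2 - 1 / N| with hT
  set TV : ℝ := ∑ i ∈ V, |‖α i‖ ^ 2 - 1 / N| with hTV
  have hTVle : TV ≤ T :=
    Finset.sum_le_sum_of_subset_of_nonneg (Finset.filter_subset _ _)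
      (fun i _ _ => abs_nonneg _)
  have hTle : T ≤ ε ^ 4 / 50 := by linarith
  have hcard : (V.card : ℝ) * ((ε ^ 2 / 5) / N) ≤ TV := by
    rw [hTV]
    calc (V.card : ℝ) * ((ε ^ 2 / 5) / N) = ∑ _i ∈ V, (ε ^ 2 / 5) / N := by
          rw [Finset.sum_const, nsmul_eq_mul]
      _ ≤ ∑ i ∈ V, |‖α i‖ ^ 2 - 1 / N| := by
          refine Finset.sum_le_sum fun i hi => ?_
          have := Finset.mem_filter.mp hi
          linarith [not_le.mp this.2]
  have hVsum : ∑ i ∈ V, ‖α i ^ 2 - r‖ ≤ TV + (V.card : ℝ) * (2 / (N:ℝ)) := by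
    rw [hTV]
    calc ∑ i ∈ V, ‖α i ^ 2 - r‖ ≤ ∑ i ∈ V, (|‖α i‖ ^ 2 - 1 / (N:ℝ)| + 2 / (N:ℝ)) := by
          refine Finset.sum_le_sum fun i _ => ?_
          have h1 : ‖α i ^ 2 - r‖ ≤ ‖α i‖ ^ 2 + 1 / N := by
            calc ‖α i ^ 2 - r‖ ≤ ‖α i ^ 2‖ + ‖r‖ := norm_sub_le _ _
              _ = ‖α i‖ ^ 2 + 1 / N := by rw [norm_pow, hr]
          have h2 : ‖α i‖ ^ 2 ≤ |‖α i‖ ^ 2 - 1 / N| + 1 / N := by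
            cases abs_cases (‖α i‖ ^ 2 - 1 / N) with
            | inl h => linarith [h.1]
            | inr h => linarith [h.1, abs_nonneg (‖α i‖ ^ 2 - 1 / N)]
          have h3 : 2 / (N:ℝ) = 1 / (N:ℝ) + 1 / (N:ℝ) := by ring
          linarith
      _ = (∑ i ∈ V, |‖α i‖ ^ 2 - 1 / N|) + (V.card : ℝ) * (2 / (N:ℝ)) := by
          rw [Finset.sum_add_distrib, Finset.sum_const, nsmul_eq_mul]
  set x : ℝ := (V.card : ℝ) / N with hx
  have hx0 : 0 ≤ x := by positivity
  have hxε : x * (ε ^ 2 / 5) ≤ TV := by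
    have : (V.card : ℝ) * ((ε ^ 2 / 5) / N) = x * (ε ^ 2 / 5) := by
      rw [hx]; ring
    linarith [hcard, this.le, this.symm.le]
  have hxle : 2 * x ≤ ε ^ 2 / 5 := by
    have hTV2 : TV ≤ ε ^ 4 / 50 := hTVle.trans hTle
    nlinarith [mul_pos hε hε, sq_nonneg ε]
  have hVN : (V.card : ℝ) * (2 / (N:ℝ)) = 2 * x := by rw [hx]; ring
  have hTVε : TV ≤ ε ^ 2 / 25 := by nlinarith [hTVle.trans hTle]
  linarith [hsplit, hfull, hVsum, hVN.le, hVN.symm.le]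
end

section
/- Let V be a finite collection of vectors in the plane ℝ² (possibly with multiplicity, i.e., an indexed finite family), and let κ > 0 and δ ≥ 0. Suppose that 1 − δ ≤ ‖v‖ ≤ 1 + δ for every v ∈ V, and that ∑_{v ∈ V} ‖v − w‖ ≥ κ|V| for every unit vector w ∈ ℝ². Then provided δ ≤ κ/2, there exist subcollections X, Y ⊆ V, both of size at least κ|V|/40, such that ‖x − y‖ ≥ κ/20 for all x ∈ X and y ∈ Y. -/
/-!
Sweeping a threshold through the values of one coordinate, either `m` of the points lie at least
`s` below `m` others, or a slab of width `s` misses fewer than `2m` points.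
If no coordinate of the plane separates, all but `4m` of the vectors, `m = κ|V|/40`, lie in a
square of side `κ/20`, hence within `κ/10 + δ` of a single unit vector `w`. The remaining
vectors are within `2 + δ` of `w`, and since `κ ≤ 2 + δ ≤ 4` this forces
`∑ ‖v - w‖ < κ|V|`.
-/

open Finset

theorem EuclideanSpace.norm_le_sum_norm {𝕜 ι : Type*} [RCLike 𝕜] [Fintype ι]
    (x : EuclideanSpace 𝕜 ι) : ‖x‖ ≤ ∑ i, ‖x i‖ := by
  refine (pow_le_pow_iff_left₀ (norm_nonneg _) (sum_nonneg fun i _ => norm_nonneg _)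
    two_ne_zero).mp ?_
  rw [EuclideanSpace.norm_sq_eq]
  exact sum_sq_le_sq_sum_of_nonneg fun i _ => norm_nonneg _

theorem exists_norm_eq_one_norm_sub_eq {E : Type*} [NormedAddCommGroup E] [NormedSpace ℝ E]
    [Nontrivial E] (x : E) : ∃ w : E, ‖w‖ = 1 ∧ ‖x - w‖ = |‖x‖ - 1| := by
  rcases eq_or_ne x 0 with rfl | hx
  · obtain ⟨w, hw⟩ := exists_norm_eq E zero_le_one
    exact ⟨w, hw, by simp [hw]⟩
  have hpos : 0 < ‖x‖ := norm_pos_iff.mpr hx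
  refine ⟨‖x‖⁻¹ • x, by simpa using norm_smul_inv_norm (𝕜 := ℝ) hx, ?_⟩
  calc ‖x - ‖x‖⁻¹ • x‖ = |1 - ‖x‖⁻¹| * ‖x‖ := by
        rw [← Real.norm_eq_abs, ← norm_smul, sub_smul, one_smul]
    _ = |‖x‖ - 1| := by
        rw [← abs_of_pos hpos, ← abs_mul, abs_of_pos hpos, sub_mul, inv_mul_cancel₀ hpos.ne',
          one_mul, abs_sub_comm]

theorem sum_le_card_mul_add_card_compl_mul {ι : Type*} [Fintype ι] [DecidableEq ι]
    (f : ι → ℝ) (S : Finset ι) {a b : ℝ} (ha : ∀ i ∈ S, f i ≤ a) (hb : ∀ i ∈ Sᶜ, f i ≤ b) :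
    ∑ i, f i ≤ #S * a + #Sᶜ * b := by
  rw [← sum_add_sum_compl S]
  simpa only [nsmul_eq_mul] using add_le_add (sum_le_card_nsmul S f a ha)
    (sum_le_card_nsmul Sᶜ f b hb)

theorem exists_separated_or_card_slab_gt {ι : Type*} [Fintype ι] (f : ι → ℝ) (m s : ℝ)
    (hm : m ≤ Fintype.card ι) :
    (∃ X Y : Finset ι, m ≤ #X ∧ m ≤ #Y ∧ ∀ x ∈ X, ∀ y ∈ Y, f x + s ≤ f y) ∨
      ∃ t, (Fintype.card ι : ℝ) - 2 * m < #{i | t ≤ f i ∧ f i < t + s} := by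
  classical
  rcases le_or_gt m 0 with hm0 | hm0
  · exact Or.inl ⟨∅, ∅, by simpa using hm0, by simpa using hm0, by simp⟩
  have : Nonempty ι := Fintype.card_pos_iff.mp (by exact_mod_cast hm0.trans_le hm)
  obtain ⟨imax, -, himax⟩ := exists_max_image univ f univ_nonempty
  -- `t` is the least value of `f` with at least `m` values of `f` at most `t`
  obtain ⟨i₀, hi₀, hmin⟩ := exists_min_image {i | m ≤ #{j | f j ≤ f i}} f
    ⟨imax, by simpa [filter_true_of_mem fun j _ => himax j (mem_univ j)] using hm⟩
  set t := f i₀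
  have hlow : (#{j | f j < t} : ℝ) < m := by
    by_contra! h
    obtain ⟨i₁, hi₁, hmax⟩ := exists_max_image {j | f j < t} f
      (card_pos.mp (by exact_mod_cast hm0.trans_le h))
    have hsub : ({j | f j < t} : Finset ι) ⊆ ({j | f j ≤ f i₁} : Finset ι) := fun j hj =>
      mem_filter.mpr ⟨mem_univ j, hmax j hj⟩
    have hcard : (#{j | f j < t} : ℝ) ≤ #{j | f j ≤ f i₁} := by exact_mod_cast card_le_card hsub
    have : t ≤ f i₁ := hmin i₁ (mem_filter.mpr ⟨mem_univ _, h.trans hcard⟩)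
    exact absurd (mem_filter.mp hi₁).2 this.not_gt
  by_cases hhigh : m ≤ #{j | t + s ≤ f j}
  · exact Or.inl ⟨_, _, (mem_filter.mp hi₀).2, hhigh, fun x hx y hy =>
      (add_le_add_left (mem_filter.mp hx).2 s).trans (mem_filter.mp hy).2⟩
  refine Or.inr ⟨t, ?_⟩
  have hcover : (univ : Finset ι) ⊆ ({j | f j < t} : Finset ι) ∪
      ({j | t ≤ f j ∧ f j < t + s} : Finset ι) ∪ ({j | t + s ≤ f j} : Finset ι) := by
    intro j _
    simp only [mem_union, mem_filter, mem_univ, true_and]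
    rcases lt_or_ge (f j) t with h | h
    · exact Or.inl (Or.inl h)
    rcases lt_or_ge (f j) (t + s) with h' | h'
    · exact Or.inl (Or.inr ⟨h, h'⟩)
    · exact Or.inr h'
  have hcard := (card_le_card hcover).trans
    ((card_union_le _ _).trans (Nat.add_le_add_right (card_union_le _ _) _))
  rw [card_univ] at hcard
  have : (Fintype.card ι : ℝ) ≤ #{j | f j < t} + #{j | t ≤ f j ∧ f j < t + s} +
      #{j | t + s ≤ f j} := by exact_mod_cast hcard
  linarith [not_le.mp hhigh]

theorem exists_separated_or_card_cluster_ge {ι : Type*} [Fintype ι] {d : ℕ}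
    (v : ι → EuclideanSpace ℝ (Fin d)) (m s : ℝ) (hm : m ≤ Fintype.card ι) :
    (∃ X Y : Finset ι, m ≤ #X ∧ m ≤ #Y ∧ ∀ x ∈ X, ∀ y ∈ Y, s ≤ ‖v x - v y‖) ∨
      ∃ S : Finset ι, (Fintype.card ι : ℝ) - 2 * d * m ≤ #S ∧
        ∀ i ∈ S, ∀ j ∈ S, ‖v i - v j‖ ≤ d * s := by
  classical
  by_cases hsep : ∃ k, ∃ X Y : Finset ι, m ≤ #X ∧ m ≤ #Y ∧
      ∀ x ∈ X, ∀ y ∈ Y, v x k + s ≤ v y k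
  · obtain ⟨k, X, Y, hX, hY, hXY⟩ := hsep
    refine Or.inl ⟨X, Y, hX, hY, fun x hx y hy => ?_⟩
    calc s ≤ |v x k - v y k| := by
          rw [abs_sub_comm]; exact le_abs.mpr (Or.inl (by linarith [hXY x hx y hy]))
      _ ≤ ‖v x - v y‖ := by simpa using PiLp.norm_apply_le (v x - v y) k
  have hslab (k : Fin d) := (exists_separated_or_card_slab_gt (fun i => v i k) m s hm).resolve_left
    fun h => hsep ⟨k, h⟩
  choose t ht using hslab
  set S : Finset ι := {i | ∀ k, t k ≤ v i k ∧ v i k < t k + s}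
  set bad : Fin d → Finset ι := fun k => {i | ¬ (t k ≤ v i k ∧ v i k < t k + s)}
  refine Or.inr ⟨S, ?_, fun i hi j hj => ?_⟩
  · have hbad (k : Fin d) : (#(bad k) : ℝ) < 2 * m := by
      have := card_filter_add_card_filter_not (s := univ)
        (fun i => t k ≤ v i k ∧ v i k < t k + s)
      rw [card_univ] at this
      have : (#(bad k) : ℝ) = Fintype.card ι - #{i | t k ≤ v i k ∧ v i k < t k + s} := by
        rw [← this]; push_cast; ring
      linarith [ht k]
    have hcompl : Sᶜ ⊆ univ.biUnion bad := by
      intro i hi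
      simpa [S, bad] using hi
    have hle : (#Sᶜ : ℝ) ≤ ∑ k, (#(bad k) : ℝ) := by
      exact_mod_cast (card_le_card hcompl).trans card_biUnion_le
    have hsum : ∑ k, (#(bad k) : ℝ) ≤ 2 * d * m := by
      simpa [mul_comm, mul_left_comm] using sum_le_sum fun k (_ : k ∈ univ) => (hbad k).le
    have : (#S : ℝ) + #Sᶜ = Fintype.card ι := by exact_mod_cast card_add_card_compl S
    linarith
  · have hi := (mem_filter.mp hi).2
    have hj := (mem_filter.mp hj).2
    calc ‖v i - v j‖ ≤ ∑ k, ‖(v i - v j) k‖ := EuclideanSpace.norm_le_sum_norm _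
      _ ≤ ∑ _k : Fin d, s := sum_le_sum fun k _ => by
          rw [PiLp.sub_apply, Real.norm_eq_abs, abs_le]
          constructor <;> linarith [hi k, hj k]
      _ = d * s := by simp

theorem exists_norm_eq_one_sum_norm_sub_lt_of_cluster {ι E : Type*} [Fintype ι] [Nonempty ι]
    [NormedAddCommGroup E] [NormedSpace ℝ E] [Nontrivial E] (v : ι → E) {κ δ : ℝ}
    (hκ : 0 < κ) (hκ4 : κ ≤ 4) (hδκ : δ ≤ κ / 2) (hnorm : ∀ i, 1 - δ ≤ ‖v i‖ ∧ ‖v i‖ ≤ 1 + δ)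
    {S : Finset ι} (hS : (Fintype.card ι : ℝ) - κ * Fintype.card ι / 10 ≤ #S)
    (hdiam : ∀ i ∈ S, ∀ j ∈ S, ‖v i - v j‖ ≤ κ / 10) :
    ∃ w : E, ‖w‖ = 1 ∧ ∑ i, ‖v i - w‖ < κ * Fintype.card ι := by
  classical
  have hN : (0 : ℝ) < Fintype.card ι := by exact_mod_cast Fintype.card_pos
  obtain ⟨i₀, hi₀⟩ : S.Nonempty := card_pos.mp (by exact_mod_cast (by nlinarith : (0 : ℝ) < #S))
  obtain ⟨w, hw, hw_near⟩ := exists_norm_eq_one_norm_sub_eq (v i₀)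
  have hnear (i : ι) (hi : i ∈ S) : ‖v i - w‖ ≤ κ / 10 + δ := by
    have := norm_sub_le_norm_sub_add_norm_sub (v i) (v i₀) w
    have := hdiam i hi i₀ hi₀
    have : |‖v i₀‖ - 1| ≤ δ := abs_sub_le_iff.mpr ⟨by linarith [hnorm i₀], by linarith [hnorm i₀]⟩
    linarith
  have hfar (i : ι) (_ : i ∈ Sᶜ) : ‖v i - w‖ ≤ 2 + δ := by
    linarith [norm_sub_le (v i) w, (hnorm i).2]
  have hsum := sum_le_card_mul_add_card_compl_mul _ S hnear hfar
  have hcard : (#S : ℝ) + #Sᶜ = Fintype.card ι := by exact_mod_cast card_add_card_compl S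
  refine ⟨w, hw, ?_⟩
  nlinarith [mul_nonneg (by linarith : (0 : ℝ) ≤ 2 - κ / 10)
    (by linarith : (0 : ℝ) ≤ #S - (Fintype.card ι - κ * Fintype.card ι / 10)),
    mul_le_mul_of_nonneg_right hδκ hN.le, mul_pos (mul_pos hκ hκ) hN]

theorem geometric_separation_general {ι : Type*} [Fintype ι]
    (v : ι → EuclideanSpace ℝ (Fin 2)) (κ δ : ℝ) (hκ : 0 < κ)
    (hδκ : δ ≤ κ / 2)
    (hnorm : ∀ i, 1 - δ ≤ ‖v i‖ ∧ ‖v i‖ ≤ 1 + δ)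
    (hfar : ∀ w : EuclideanSpace ℝ (Fin 2), ‖w‖ = 1 →
      κ * (Fintype.card ι : ℝ) ≤ ∑ i, ‖v i - w‖) :
    ∃ X Y : Finset ι,
      κ * (Fintype.card ι : ℝ) / 40 ≤ (X.card : ℝ) ∧
      κ * (Fintype.card ι : ℝ) / 40 ≤ (Y.card : ℝ) ∧
      ∀ x ∈ X, ∀ y ∈ Y, κ / 20 ≤ ‖v x - v y‖ := by
  rcases isEmpty_or_nonempty ι with hι | hι
  · exact ⟨∅, ∅, by simp⟩
  have hκ4 : κ ≤ 4 := by
    obtain ⟨w, hw⟩ := exists_norm_eq (EuclideanSpace ℝ (Fin 2)) zero_le_one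
    have hN : (0 : ℝ) < Fintype.card ι := by exact_mod_cast Fintype.card_pos
    have := (hfar w hw).trans (sum_le_card_nsmul univ _ (2 + δ) fun i _ => by
      linarith [norm_sub_le (v i) w, (hnorm i).2])
    rw [card_univ, nsmul_eq_mul] at this
    nlinarith
  rcases exists_separated_or_card_cluster_ge v (κ * Fintype.card ι / 40) (κ / 20)
    (by nlinarith) with hsep | ⟨S, hS, hdiam⟩
  · exact hsep
  push_cast at hS hdiam
  obtain ⟨w, hw, hlt⟩ :=
    exists_norm_eq_one_sum_norm_sub_lt_of_cluster v hκ hκ4 hδκ hnorm (S := S) (by linarith)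
      fun i hi j hj => by linarith [hdiam i hi j hj]
  exact absurd (hfar w hw) hlt.not_ge

/-- let V = (v_i)_{i ∈ ι} be a finite family of vectors in the plane with
1 − δ ≤ ‖v_i‖ ≤ 1 + δ for all i, and ∑_i ‖v_i − w‖ ≥ κ|V| for every unit vector w.
If δ ≤ κ/2, there are subcollections X, Y of size at least κ|V|/40 with
‖v_x − v_y‖ ≥ κ/20 for all x ∈ X, y ∈ Y. -/
theorem geometric_separation {ι : Type*} [Fintype ι]
    (v : ι → EuclideanSpace ℝ (Fin 2)) (κ δ : ℝ) (hκ : 0 < κ) (hδ : 0 ≤ δ)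
    (hδκ : δ ≤ κ / 2)
    (hnorm : ∀ i, 1 - δ ≤ ‖v i‖ ∧ ‖v i‖ ≤ 1 + δ)
    (hfar : ∀ w : EuclideanSpace ℝ (Fin 2), ‖w‖ = 1 →
      κ * (Fintype.card ι : ℝ) ≤ ∑ i, ‖v i - w‖) :
    ∃ X Y : Finset ι,
      κ * (Fintype.card ι : ℝ) / 40 ≤ (X.card : ℝ) ∧
      κ * (Fintype.card ι : ℝ) / 40 ≤ (Y.card : ℝ) ∧
      ∀ x ∈ X, ∀ y ∈ Y, κ / 20 ≤ ‖v x - v y‖ :=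
  geometric_separation_general v κ δ hκ hδκ hnorm hfar
end

section
/- Let D₁ and D₂ be probability distributions on a finite set, let E be an event (a subset of that set) with Pr_{x∼D₁}[E] ≥ a, and suppose ‖D₁ − D₂‖ ≤ κ with κ < a. Let D₁′ and D₂′ denote D₁ and D₂ respectively conditioned on E. Then ‖D₁′ − D₂′‖ ≤ κ/(a − κ). -/
open Finset

/-!
Write `p = D₁(E)` and `q = D₂(E)`. Termwise `D₁/p - D₂/q = (D₁ - D₂)/p + D₂ (q - p)/(p q)`, so
the conditioned distance is at most `(∑_E |D₁ - D₂| + |p - q|) / (2p)`. Since both total masses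
are `1`, `|p - q| ≤ ∑_{Eᶜ} |D₁ - D₂|`, so the bound is `‖D₁ - D₂‖ / p ≤ κ / a ≤ κ / (a - κ)`.
-/

theorem sum_abs_div_sub_div_le {ι : Type*} {s : Finset ι} {f g : ι → ℝ} {p : ℝ} (hp : 0 < p)
    (hg : ∀ x ∈ s, 0 ≤ g x) (hq : 0 < ∑ x ∈ s, g x) :
    ∑ x ∈ s, |f x / p - g x / ∑ y ∈ s, g y|
      ≤ (∑ x ∈ s, |f x - g x| + |p - ∑ x ∈ s, g x|) / p := by
  generalize hq_def : ∑ x ∈ s, g x = q at hq ⊢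
  have hterm : ∀ x ∈ s,
      |f x / p - g x / q| ≤ |f x - g x| / p + g x * (|p - q| / (p * q)) := by
    intro x hx
    have hsplit : f x / p - g x / q = (f x - g x) / p + g x * ((q - p) / (p * q)) := by
      field_simp; ring
    rw [hsplit, abs_sub_comm p q]
    refine (abs_add_le _ _).trans_eq ?_
    rw [abs_div, abs_mul, abs_div, abs_of_pos hp, abs_of_nonneg (hg x hx),
      abs_of_pos (mul_pos hp hq)]
  calc ∑ x ∈ s, |f x / p - g x / q|
      ≤ ∑ x ∈ s, (|f x - g x| / p + g x * (|p - q| / (p * q))) := sum_le_sum hterm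
    _ = (∑ x ∈ s, |f x - g x| + |p - q|) / p := by
      rw [sum_add_distrib, ← sum_div, ← sum_mul, hq_def]
      field_simp

section VariationDistance

variable {X : Type*} [Fintype X]

noncomputable def varDist (f g : X → ℝ) : ℝ := (1 / 2) * ∑ x, |f x - g x|

noncomputable def condition [DecidableEq X] (f : X → ℝ) (E : Finset X) (x : X) : ℝ :=
  if x ∈ E then f x / ∑ y ∈ E, f y else 0

theorem varDist_nonneg (f g : X → ℝ) : 0 ≤ varDist f g := by
  unfold varDist; positivity

variable [DecidableEq X]

theorem abs_sum_sub_sum_le_sum_compl {f g : X → ℝ} (h : ∑ x, f x = ∑ x, g x) (E : Finset X) :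
    |∑ x ∈ E, f x - ∑ x ∈ E, g x| ≤ ∑ x ∈ Eᶜ, |f x - g x| := by
  have hcompl : ∑ x ∈ E, f x - ∑ x ∈ E, g x = -∑ x ∈ Eᶜ, (f x - g x) := by
    rw [sum_sub_distrib]
    linarith [sum_add_sum_compl E f, sum_add_sum_compl E g]
  rw [hcompl, abs_neg]
  exact abs_sum_le_sum_abs _ _

/-- Bounding the defect once by `E` and once by `Eᶜ` gives the factor `1 / 2`. -/
theorem abs_sum_sub_sum_le_varDist {f g : X → ℝ} (h : ∑ x, f x = ∑ x, g x) (E : Finset X) :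
    |∑ x ∈ E, f x - ∑ x ∈ E, g x| ≤ varDist f g := by
  have hE : |∑ x ∈ E, f x - ∑ x ∈ E, g x| ≤ ∑ x ∈ E, |f x - g x| := by
    rw [← sum_sub_distrib]
    exact abs_sum_le_sum_abs _ _
  have hEc := abs_sum_sub_sum_le_sum_compl h E
  unfold varDist
  linarith [sum_add_sum_compl E fun x => |f x - g x|]

theorem sum_abs_condition_sub_condition (f g : X → ℝ) (E : Finset X) :
    ∑ x, |condition f E x - condition g E x|
      = ∑ x ∈ E, |f x / ∑ y ∈ E, f y - g x / ∑ y ∈ E, g y| := by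
  rw [← sum_add_sum_compl E]
  have hEc : ∑ x ∈ Eᶜ, |condition f E x - condition g E x| = 0 :=
    sum_eq_zero fun x hx => by simp [condition, mem_compl.mp hx]
  rw [hEc, add_zero]
  exact sum_congr rfl fun x hx => by simp only [condition, if_pos hx]

theorem varDist_condition_le {f g : X → ℝ} (hg : ∀ x, 0 ≤ g x) (h : ∑ x, f x = ∑ x, g x)
    {E : Finset X} (hp : 0 < ∑ x ∈ E, f x) (hq : 0 < ∑ x ∈ E, g x) :
    varDist (condition f E) (condition g E) ≤ varDist f g / ∑ x ∈ E, f x := by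
  have hE := sum_abs_div_sub_div_le (f := f) hp (fun x _ => hg x) hq
  have hEc := abs_sum_sub_sum_le_sum_compl h E
  have htotal := sum_add_sum_compl E fun x => |f x - g x|
  unfold varDist
  rw [sum_abs_condition_sub_condition, mul_div_assoc]
  gcongr
  refine hE.trans ?_
  gcongr
  linarith

end VariationDistance

theorem conditioned_variation_distance_general {X : Type*} [Fintype X] [DecidableEq X]
    (D₁ D₂ : X → ℝ)
    (h₁s : ∑ x, D₁ x = 1)
    (h₂ : ∀ x, 0 ≤ D₂ x) (h₂s : ∑ x, D₂ x = 1)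
    (E : Finset X) (a κ : ℝ)
    (ha : a ≤ ∑ x ∈ E, D₁ x)
    (hκ : (1 / 2) * ∑ x, |D₁ x - D₂ x| ≤ κ) (hκa : κ < a) :
    (1 / 2) * ∑ x, |(if x ∈ E then D₁ x / ∑ y ∈ E, D₁ y else 0) -
        (if x ∈ E then D₂ x / ∑ y ∈ E, D₂ y else 0)| ≤ κ / (a - κ) := by
  change varDist (condition D₁ E) (condition D₂ E) ≤ κ / (a - κ)
  replace hκ : varDist D₁ D₂ ≤ κ := hκ
  have hsum : ∑ x, D₁ x = ∑ x, D₂ x := h₁s.trans h₂s.symm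
  have hκ0 : 0 ≤ κ := (varDist_nonneg D₁ D₂).trans hκ
  have hmass := abs_le.mp ((abs_sum_sub_sum_le_varDist hsum E).trans hκ)
  have hq : 0 < ∑ x ∈ E, D₂ x := by linarith
  calc varDist (condition D₁ E) (condition D₂ E)
      ≤ varDist D₁ D₂ / ∑ x ∈ E, D₁ x := varDist_condition_le h₂ hsum (by linarith) hq
    _ ≤ κ / (a - κ) := by gcongr; linarith

/-- if Pr_{D₁}[E] ≥ a and ‖D₁ − D₂‖ ≤ κ < a, then the conditioned
distributions satisfy ‖D₁′ − D₂′‖ ≤ κ/(a − κ). -/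
theorem conditioned_variation_distance {X : Type*} [Fintype X] [DecidableEq X]
    (D₁ D₂ : X → ℝ)
    (h₁ : ∀ x, 0 ≤ D₁ x) (h₁s : ∑ x, D₁ x = 1)
    (h₂ : ∀ x, 0 ≤ D₂ x) (h₂s : ∑ x, D₂ x = 1)
    (E : Finset X) (a κ : ℝ)
    (ha : a ≤ ∑ x ∈ E, D₁ x)
    (hκ : (1 / 2) * ∑ x, |D₁ x - D₂ x| ≤ κ) (hκa : κ < a) :
    (1 / 2) * ∑ x, |(if x ∈ E then D₁ x / ∑ y ∈ E, D₁ y else 0) -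
        (if x ∈ E then D₂ x / ∑ y ∈ E, D₂ y else 0)| ≤ κ / (a - κ) :=
  conditioned_variation_distance_general D₁ D₂ h₁s h₂ h₂s E a κ ha hκ hκa
end

section
/- Let D = (p_x, q_x)_{x∈[N]} and D′ = (p′_x, q′_x)_{x∈[N]} be probability distributions over the set [N] × {0,1}, where p_x, q_x denote the probabilities of (x,0) and (x,1) under D, and similarly for D′. Suppose that ‖D − D′‖ ≤ μ, and that 2 p_x q_x ≥ c (p_x + q_x)² for every x ∈ [N]. Let S be the set of all x ∈ [N] such that 2 p′_x q′_x ≥ c′ (p′_x + q′_x)². Then ∑_{x ∈ S} (p′_x + q′_x) ≥ 1 − 8μ/(c − 2c′), for all constants c ∈ (0, 1/2) and c′ ∈ (0, c/2). -/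
open Finset

lemma aux_key_half (p q p' q' c c' : ℝ) (hp : 0 ≤ p) (hq : 0 ≤ q) (hp' : 0 ≤ p') (hq' : 0 ≤ q')
    (hc₀ : 0 < c) (hc₁ : c < 1/2) (hc'₀ : 0 < c') (hc'₁ : c' < c/2)
    (hpq' : p' ≤ q')
    (hbal : c * (p + q)^2 ≤ 2*p*q) (hunb : 2*p'*q' < c' * (p'+q')^2) :
    (c - 2*c')/4 * (p'+q') ≤ |p - p'| + |q - q'| := by
  have ha1 := abs_nonneg (p - p')
  have ha2 := abs_nonneg (q - q')
  have hcc' : 0 < c - 2*c' := by linarith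
  by_cases hcase : p' + q' ≤ |p - p'| + |q - q'|
  · nlinarith
  push_neg at hcase
  have hs'pos : 0 < p' + q' := by linarith
  have hp'lt : p' < c' * (p'+q') := by nlinarith
  have habs1 : p - p' ≤ |p - p'| := le_abs_self _
  have habs2 : p' - p ≤ |p - p'| := by
    rw [abs_sub_comm]; exact le_abs_self _
  have habs3 : q' - q ≤ |q - q'| := by
    rw [abs_sub_comm]; exact le_abs_self _
  have hs : p' + q' - (|p - p'| + |q - q'|) ≤ p + q := by linarith
  have hspos : 0 < p + q := by linarith
  have hpge : c/2 * (p+q) ≤ p := by nlinarith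
  have hstep : c/2 * (p' + q' - (|p - p'| + |q - q'|)) ≤ c/2 * (p+q) :=
    mul_le_mul_of_nonneg_left hs (by linarith)
  nlinarith

lemma aux_key (p q p' q' c c' : ℝ) (hp : 0 ≤ p) (hq : 0 ≤ q) (hp' : 0 ≤ p') (hq' : 0 ≤ q')
    (hc₀ : 0 < c) (hc₁ : c < 1/2) (hc'₀ : 0 < c') (hc'₁ : c' < c/2)
    (hbal : c * (p + q)^2 ≤ 2*p*q) (hunb : 2*p'*q' < c' * (p'+q')^2) :
    (c - 2*c')/4 * (p'+q') ≤ |p - p'| + |q - q'| := by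
  rcases le_total p' q' with h | h
  · exact aux_key_half p q p' q' c c' hp hq hp' hq' hc₀ hc₁ hc'₀ hc'₁ h hbal hunb
  · have := aux_key_half q p q' p' c c' hq hp hq' hp' hc₀ hc₁ hc'₀ hc'₁ h
      (by nlinarith) (by nlinarith)
    linarith [this]

/-- let D = (p_x, q_x) and D′ = (p′_x, q′_x) be distributions on
[N] × {0,1} with ‖D − D′‖ ≤ μ, and suppose 2p_x q_x ≥ c(p_x + q_x)² for every x.
Then the set S of x with 2p′_x q′_x ≥ c′(p′_x + q′_x)² satisfies
∑_{x∈S} (p′_x + q′_x) ≥ 1 − 8μ/(c − 2c′), for all c ∈ (0, 1/2), c′ ∈ (0, c/2). -/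
theorem unbalanced_survives_perturbation {N : ℕ} (p q p' q' : Fin N → ℝ)
    (hp : ∀ x, 0 ≤ p x) (hq : ∀ x, 0 ≤ q x) (hsum : ∑ x, (p x + q x) = 1)
    (hp' : ∀ x, 0 ≤ p' x) (hq' : ∀ x, 0 ≤ q' x) (hsum' : ∑ x, (p' x + q' x) = 1)
    (μ c c' : ℝ) (hc₀ : 0 < c) (hc₁ : c < 1 / 2) (hc'₀ : 0 < c') (hc'₁ : c' < c / 2)
    (hdist : (1 / 2) * ∑ x, (|p x - p' x| + |q x - q' x|) ≤ μ)
    (hbal : ∀ x, c * (p x + q x) ^ 2 ≤ 2 * p x * q x) :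
    1 - 8 * μ / (c - 2 * c') ≤
      ∑ x ∈ univ.filter (fun x : Fin N => c' * (p' x + q' x) ^ 2 ≤ 2 * p' x * q' x),
        (p' x + q' x) := by
  set S := univ.filter (fun x : Fin N => c' * (p' x + q' x) ^ 2 ≤ 2 * p' x * q' x) with hS
  have hcc' : 0 < c - 2 * c' := by linarith
  have hsplit : ∑ x ∈ S, (p' x + q' x) + ∑ x ∈ Sᶜ, (p' x + q' x) = 1 := by
    rw [Finset.sum_add_sum_compl, hsum']
  have hbound : ∀ x ∈ Sᶜ, (c - 2*c')/4 * (p' x + q' x) ≤ |p x - p' x| + |q x - q' x| := by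
    intro x hx
    rw [Finset.mem_compl, hS, Finset.mem_filter] at hx
    push_neg at hx
    have hunb : 2 * p' x * q' x < c' * (p' x + q' x)^2 := hx (Finset.mem_univ x)
    exact aux_key (p x) (q x) (p' x) (q' x) c c' (hp x) (hq x) (hp' x) (hq' x)
      hc₀ hc₁ hc'₀ hc'₁ (hbal x) hunb
  have h1 : (c - 2*c')/4 * ∑ x ∈ Sᶜ, (p' x + q' x) ≤ ∑ x, (|p x - p' x| + |q x - q' x|) := by
    rw [Finset.mul_sum]
    refine le_trans (Finset.sum_le_sum hbound) ?_
    refine Finset.sum_le_sum_of_subset_of_nonneg (Finset.subset_univ _) ?_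
    intro x _ _
    positivity
  have h2 : ∑ x, (|p x - p' x| + |q x - q' x|) ≤ 2 * μ := by linarith
  have h3 : ∑ x ∈ Sᶜ, (p' x + q' x) ≤ 8 * μ / (c - 2*c') := by
    rw [le_div_iff₀ hcc']
    nlinarith
  linarith
end

section
/- Let H and K be finite-dimensional complex Hilbert spaces with dim K ≥ 2, and let Φ be a superoperator (completely positive trace-nonincreasing map, given in operator-sum form Φ(ρ) = ∑_{i=1}^k E_i ρ E_i† with ∑_{i=1}^k E_i† E_i ≼ I) from operators on H to operators on K ⊗ K. Then the image of the set of density matrices on H under Φ cannot equal the set of separable density matrices on K ⊗ K. Equivalently: there is no superoperator Φ : H → K ⊗ K with dim H finite and dim K ≥ 2 such that every output Φ(ρ) of a density matrix ρ is a separable state, and every separable state on K ⊗ K arises as Φ(ρ) for some density matrix ρ. -/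
/-!
Suppose `Φ` maps the density matrices onto the separable states. Then every output is separable,
hence has a positive semidefinite partial transpose. Every pure product state `P_t` built from
`u_t = e₀ + t e₁` is an output, and since `P_t` has rank one, a spectral decomposition of a
preimage contains a vector `ψ_t` with `E i *ᵥ ψ_t = α_t i • (u_t ⊗ u_t)` for all `i` and
`α_t ≠ 0`. For `s ≠ t`, testing the partial transpose of `Φ(v v†)`, `v = ψ_s - μ ψ_t`, against a
suitable vector forces `μ = ⟪α_t, α_s⟫` to vanish. Thus `α_0, …, α_k` are `k + 1` nonzero pairwise
orthogonal vectors of `ℂ^k`, which is impossible.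
-/

open Matrix Finset
open scoped ComplexOrder Kronecker

/-- A bipartite density matrix on K ⊗ K (K = ℂ^d) is separable if it is a finite convex
combination of Kronecker products of density matrices on K. -/
def IsSeparableState {d : ℕ} (σ : Matrix (Fin d × Fin d) (Fin d × Fin d) ℂ) : Prop :=
  ∃ (m : ℕ) (p : Fin m → ℝ) (A B : Fin m → Matrix (Fin d) (Fin d) ℂ),
    (∀ i, 0 ≤ p i) ∧ (∑ i, p i = 1) ∧
    (∀ i, (A i).PosSemidef ∧ (A i).trace = 1) ∧
    (∀ i, (B i).PosSemidef ∧ (B i).trace = 1) ∧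
    σ = ∑ i, (p i : ℂ) • (A i ⊗ₖ B i)

theorem star_dotProduct_mulVec_vecMulVec {R n : Type*} [Fintype n] [CommSemiring R] [StarRing R]
    (a y : n → R) :
    star y ⬝ᵥ (vecMulVec a (star a) *ᵥ y) = star (star a ⬝ᵥ y) * (star a ⬝ᵥ y) := by
  rw [vecMulVec_mulVec, op_smul_eq_smul, dotProduct_smul, smul_eq_mul, star_dotProduct,
    star_star, mul_comm]

theorem conjTranspose_mul_self_eq_sum_vecMulVec {R m n : Type*} [Fintype m] [CommSemiring R]
    [StarRing R] (B : Matrix m n R) : Bᴴ * B = ∑ j, vecMulVec (star (B j)) (B j) := by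
  ext a b
  simp [mul_apply, vecMulVec_apply, Matrix.sum_apply]

section RankOne

variable {𝕜 n κ : Type*} [RCLike 𝕜] [Fintype n] [Fintype κ]

theorem mem_span_singleton_of_forall_dotProduct {a p : n → 𝕜}
    (h : ∀ y, star p ⬝ᵥ y = 0 → star a ⬝ᵥ y = 0) : a ∈ 𝕜 ∙ p := by
  set c := (star p ⬝ᵥ a) / (star p ⬝ᵥ p)
  have hp : star p ⬝ᵥ (a - c • p) = 0 := by
    rcases eq_or_ne p 0 with rfl | hp
    · simp
    · rw [dotProduct_sub, dotProduct_smul, smul_eq_mul,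
        div_mul_cancel₀ _ (dotProduct_star_self_eq_zero.not.mpr hp), sub_self]
  have : a - c • p = 0 := by
    rw [← dotProduct_star_self_eq_zero, star_sub, sub_dotProduct, h _ hp, star_smul,
      smul_dotProduct, hp, smul_zero, sub_zero]
  exact Submodule.mem_span_singleton.mpr ⟨c, (sub_eq_zero.mp this).symm⟩

theorem mem_span_of_sum_vecMulVec_eq {a : κ → n → 𝕜} {p : n → 𝕜}
    (h : ∑ i, vecMulVec (a i) (star (a i)) = vecMulVec p (star p)) (i : κ) : a i ∈ 𝕜 ∙ p := by
  refine mem_span_singleton_of_forall_dotProduct fun y hy => ?_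
  have hsum := congrArg (fun M => star y ⬝ᵥ (M *ᵥ y)) h
  simp only [sum_mulVec, dotProduct_sum, star_dotProduct_mulVec_vecMulVec, hy, mul_zero] at hsum
  have := (sum_eq_zero_iff_of_nonneg fun j _ => star_mul_self_nonneg _).mp hsum i (mem_univ i)
  exact (CStarRing.star_mul_self_eq_zero_iff _).mp this

end RankOne

theorem exists_ofReal_smul_unit {n : Type*} [Fintype n] {v : n → ℂ} (hv : v ≠ 0) :
    ∃ r : ℝ, 0 < r ∧ star ((r : ℂ) • v) ⬝ᵥ ((r : ℂ) • v) = 1 := by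
  have hpos : 0 < star v ⬝ᵥ v :=
    (dotProduct_star_self_nonneg v).lt_of_ne' (dotProduct_star_self_eq_zero.not.mpr hv)
  obtain ⟨q, hq⟩ : ∃ q : ℝ, star v ⬝ᵥ v = q :=
    ⟨_, Complex.eq_re_of_ofReal_le (r := 0) (by rw [Complex.ofReal_zero]; exact hpos.le)⟩
  have hq_pos : 0 < q := by rwa [hq, Complex.zero_lt_real] at hpos
  refine ⟨(√q)⁻¹, by positivity, ?_⟩
  rw [star_smul, smul_dotProduct, dotProduct_smul, hq, Complex.star_def, Complex.conj_ofReal,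
    smul_eq_mul, smul_eq_mul, ← mul_assoc, ← Complex.ofReal_mul, ← Complex.ofReal_mul,
    ← mul_inv, Real.mul_self_sqrt hq_pos.le, inv_mul_cancel₀ hq_pos.ne', Complex.ofReal_one]

section Kraus

variable {R n o κ : Type*} [CommSemiring R] [StarRing R] [Fintype n] [Fintype κ]

def krausMap (E : κ → Matrix o n R) : Matrix n n R →ₗ[R] Matrix o o R where
  toFun ρ := ∑ i, E i * ρ * (E i)ᴴ
  map_add' ρ σ := by simp only [Matrix.mul_add, Matrix.add_mul, sum_add_distrib]
  map_smul' c ρ := by simp only [Matrix.mul_smul, Matrix.smul_mul, smul_sum, RingHom.id_apply]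

theorem krausMap_apply (E : κ → Matrix o n R) (ρ : Matrix n n R) :
    krausMap E ρ = ∑ i, E i * ρ * (E i)ᴴ := rfl

theorem krausMap_vecMulVec (E : κ → Matrix o n R) (v : n → R) :
    krausMap E (vecMulVec v (star v)) = ∑ i, vecMulVec (E i *ᵥ v) (star (E i *ᵥ v)) := by
  simp only [krausMap_apply, mul_vecMulVec, vecMulVec_mul, vecMul_conjTranspose, star_star]

end Kraus

open scoped MatrixOrder in
theorem exists_forall_mulVec_mem_span_of_krausMap_eq {𝕜 n o κ : Type*} [RCLike 𝕜] [Fintype n]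
    [Fintype o] [Fintype κ] {E : κ → Matrix o n 𝕜} {ρ : Matrix n n 𝕜} (hρ : ρ.PosSemidef)
    {p : o → 𝕜} (hp : p ≠ 0) (h : krausMap E ρ = vecMulVec p (star p)) :
    ∃ ψ : n → 𝕜, (∀ i, E i *ᵥ ψ ∈ 𝕜 ∙ p) ∧ ∃ i, E i *ᵥ ψ ≠ 0 := by
  classical
  obtain ⟨B, rfl⟩ := CStarAlgebra.nonneg_iff_eq_star_mul_self.mp hρ.nonneg
  have hsum : ∑ x : κ × n, vecMulVec (E x.1 *ᵥ star (B x.2)) (star (E x.1 *ᵥ star (B x.2)))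
      = vecMulVec p (star p) := by
    rw [← h, star_eq_conjTranspose, conjTranspose_mul_self_eq_sum_vecMulVec, map_sum,
      Fintype.sum_prod_type_right]
    refine sum_congr rfl fun j _ => ?_
    simpa only [star_star] using (krausMap_vecMulVec E (star (B j))).symm
  have hspan := mem_span_of_sum_vecMulVec_eq hsum
  by_contra! hcon
  have hzero : ∀ x : κ × n, E x.1 *ᵥ star (B x.2) = 0 := fun x =>
    hcon _ (fun i => hspan (i, x.2)) x.1
  simp only [hzero, zero_vecMulVec, sum_const_zero] at hsum
  exact hp (vecMulVec_eq_zero.mp hsum.symm |>.resolve_right (by simpa using hp))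

section PartialTranspose

variable {R m n : Type*}

def tensorVec [Mul R] (a : m → R) (b : n → R) : m × n → R := fun x => a x.1 * b x.2

def partialTranspose [Semiring R] :
    Matrix (m × n) (m × n) R →ₗ[R] Matrix (m × n) (m × n) R where
  toFun M := of fun x y => M (x.1, y.2) (y.1, x.2)
  map_add' _ _ := rfl
  map_smul' _ _ := rfl

theorem partialTranspose_apply [Semiring R] (M : Matrix (m × n) (m × n) R) (x y : m × n) :
    partialTranspose M x y = M (x.1, y.2) (y.1, x.2) := rfl

variable [CommSemiring R]

theorem partialTranspose_kronecker (A : Matrix m m R) (B : Matrix n n R) :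
    partialTranspose (A ⊗ₖ B) = A ⊗ₖ Bᵀ := rfl

theorem vecMulVec_tensorVec (a c : m → R) (b d : n → R) :
    vecMulVec (tensorVec a b) (tensorVec c d) = vecMulVec a c ⊗ₖ vecMulVec b d := by
  ext x y
  simp only [vecMulVec_apply, tensorVec, kroneckerMap_apply]
  ring

theorem partialTranspose_vecMulVec_tensorVec (a c : m → R) (b d : n → R) :
    partialTranspose (vecMulVec (tensorVec a b) (tensorVec c d))
      = vecMulVec (tensorVec a d) (tensorVec c b) := by
  ext x y
  simp only [partialTranspose_apply, vecMulVec_apply, tensorVec]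
  ring

theorem tensorVec_dotProduct_tensorVec [Fintype m] [Fintype n] (a c : m → R) (b d : n → R) :
    tensorVec a b ⬝ᵥ tensorVec c d = (a ⬝ᵥ c) * (b ⬝ᵥ d) := by
  simp only [dotProduct, tensorVec, Fintype.sum_prod_type, sum_mul_sum]
  exact sum_congr rfl fun _ _ => sum_congr rfl fun _ _ => by ring

theorem smul_tensorVec_smul (c e : R) (a : m → R) (b : n → R) :
    tensorVec (c • a) (e • b) = (c * e) • tensorVec a b := by
  ext x
  simp only [tensorVec, Pi.smul_apply, smul_eq_mul]
  ring

theorem star_tensorVec [StarRing R] (a : m → R) (b : n → R) :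
    star (tensorVec a b) = tensorVec (star a) (star b) := by
  ext x
  simp only [tensorVec, Pi.star_apply, star_mul']

theorem star_dotProduct_partialTranspose_vecMulVec_tensorVec [Fintype m] [Fintype n] [StarRing R]
    (x : m × n → R) (a c : m → R) (b d : n → R) :
    star x ⬝ᵥ (partialTranspose (vecMulVec (tensorVec a b) (tensorVec c d)) *ᵥ x)
      = (star x ⬝ᵥ tensorVec a d) * (tensorVec c b ⬝ᵥ x) := by
  rw [partialTranspose_vecMulVec_tensorVec, vecMulVec_mulVec, op_smul_eq_smul, dotProduct_smul,
    smul_eq_mul, mul_comm]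

end PartialTranspose

theorem IsSeparableState.posSemidef_partialTranspose {d : ℕ}
    {σ : Matrix (Fin d × Fin d) (Fin d × Fin d) ℂ} (hσ : IsSeparableState σ) :
    (partialTranspose σ).PosSemidef := by
  obtain ⟨m, p, A, B, hp, -, hA, hB, rfl⟩ := hσ
  simp only [map_sum, map_smul, partialTranspose_kronecker]
  exact posSemidef_sum _ fun i _ =>
    ((hA i).1.kronecker (hB i).1.transpose).smul (Complex.zero_le_real.mpr (hp i))

theorem isSeparableState_vecMulVec_tensorVec {d : ℕ} {a b : Fin d → ℂ}
    (ha : star a ⬝ᵥ a = 1) (hb : star b ⬝ᵥ b = 1) :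
    IsSeparableState (vecMulVec (tensorVec a b) (star (tensorVec a b))) := by
  have hdensity : ∀ c : Fin d → ℂ, star c ⬝ᵥ c = 1 →
      (vecMulVec c (star c)).PosSemidef ∧ (vecMulVec c (star c)).trace = 1 := fun c hc =>
    ⟨posSemidef_vecMulVec_self_star c, by rw [trace_vecMulVec, dotProduct_comm, hc]⟩
  refine ⟨1, fun _ => 1, fun _ => vecMulVec a (star a), fun _ => vecMulVec b (star b),
    fun _ => zero_le_one, by simp, fun _ => hdensity a ha, fun _ => hdensity b hb, ?_⟩
  simp [star_tensorVec, vecMulVec_tensorVec]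

section Witness

variable {n : Type*} [DecidableEq n] (i₀ i₁ : n)

def lineVec (t : ℝ) : n → ℂ := Pi.single i₀ 1 + (t : ℂ) • Pi.single i₁ 1

def normalVec (s : ℝ) : n → ℂ := Pi.single i₁ 1 - (s : ℂ) • Pi.single i₀ 1

/-- `lineVec a ⊗ lineVec b` pairs with this vector to `(a - s) (b - t) + (a - t) (b - s)`, which
vanishes for `a = b ∈ {s, t}`: against it, the partial transpose of a matrix supported on
`lineVec s ⊗ lineVec s` and `lineVec t ⊗ lineVec t` only sees the off-diagonal part. -/
def pptWitness (s t : ℝ) : n × n → ℂ :=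
  tensorVec (normalVec i₀ i₁ s) (normalVec i₀ i₁ t) +
    tensorVec (normalVec i₀ i₁ t) (normalVec i₀ i₁ s)

variable {i₀ i₁}

theorem star_lineVec (t : ℝ) : star (lineVec i₀ i₁ t) = lineVec i₀ i₁ t := by
  simp [lineVec, star_add, star_smul, Pi.star_single]

theorem star_pptWitness (s t : ℝ) : star (pptWitness i₀ i₁ s t) = pptWitness i₀ i₁ s t := by
  simp [pptWitness, normalVec, star_tensorVec, star_sub, star_smul, Pi.star_single]

variable [Fintype n]

theorem lineVec_dotProduct_normalVec (h : i₀ ≠ i₁) (a s : ℝ) :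
    lineVec i₀ i₁ a ⬝ᵥ normalVec i₀ i₁ s = ((a - s : ℝ) : ℂ) := by
  simp [lineVec, normalVec, h, h.symm, dotProduct_sub, dotProduct_smul]

theorem tensorVec_lineVec_dotProduct_pptWitness (h : i₀ ≠ i₁) (s t a b : ℝ) :
    tensorVec (lineVec i₀ i₁ a) (lineVec i₀ i₁ b) ⬝ᵥ pptWitness i₀ i₁ s t
      = (((a - s) * (b - t) + (a - t) * (b - s) : ℝ) : ℂ) := by
  simp only [pptWitness, dotProduct_add, tensorVec_dotProduct_tensorVec,
    lineVec_dotProduct_normalVec h]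
  push_cast
  ring

theorem star_pptWitness_dotProduct_partialTranspose (h : i₀ ≠ i₁) (s t : ℝ) (c e : ℂ) :
    star (pptWitness i₀ i₁ s t) ⬝ᵥ (partialTranspose (vecMulVec
        (c • tensorVec (lineVec i₀ i₁ s) (lineVec i₀ i₁ s)
          + e • tensorVec (lineVec i₀ i₁ t) (lineVec i₀ i₁ t))
        (star (c • tensorVec (lineVec i₀ i₁ s) (lineVec i₀ i₁ s)
          + e • tensorVec (lineVec i₀ i₁ t) (lineVec i₀ i₁ t))))
      *ᵥ pptWitness i₀ i₁ s t) = (((s - t) ^ 4 : ℝ) : ℂ) * (c * star e + e * star c) := by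
  simp only [star_add, star_smul, star_tensorVec, star_lineVec, add_vecMulVec, vecMulVec_add,
    smul_vecMulVec, vecMulVec_smul, map_add, map_smul, add_mulVec, smul_mulVec, dotProduct_add,
    dotProduct_smul, star_dotProduct_partialTranspose_vecMulVec_tensorVec]
  simp only [star_pptWitness, dotProduct_comm (pptWitness i₀ i₁ s t),
    tensorVec_lineVec_dotProduct_pptWitness h, smul_eq_mul]
  push_cast
  ring

end Witness

theorem posSemidef_partialTranspose_krausMap_vecMulVec {d : ℕ} {ι κ : Type*} [Fintype ι]
    [Fintype κ] {E : κ → Matrix (Fin d × Fin d) ι ℂ}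
    (hsep : krausMap E '' {ρ | ρ.PosSemidef ∧ ρ.trace = 1} ⊆ {σ | IsSeparableState σ})
    (v : ι → ℂ) : (partialTranspose (krausMap E (vecMulVec v (star v)))).PosSemidef := by
  rcases eq_or_ne v 0 with rfl | hv
  · simpa using PosSemidef.zero
  obtain ⟨r, hr, hunit⟩ := exists_ofReal_smul_unit hv
  have hsep_r : IsSeparableState (krausMap E (vecMulVec ((r : ℂ) • v) (star ((r : ℂ) • v)))) :=
    hsep ⟨_, ⟨posSemidef_vecMulVec_self_star _, by rw [trace_vecMulVec, dotProduct_comm, hunit]⟩,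
      rfl⟩
  have hscale : vecMulVec ((r : ℂ) • v) (star ((r : ℂ) • v))
      = ((r * r : ℝ) : ℂ) • vecMulVec v (star v) := by
    rw [star_smul, smul_vecMulVec, vecMulVec_smul, smul_smul, Complex.star_def,
      Complex.conj_ofReal, Complex.ofReal_mul]
  rw [hscale, map_smul] at hsep_r
  have := hsep_r.posSemidef_partialTranspose.smul
    (Complex.zero_le_real.mpr (inv_nonneg.mpr (mul_self_nonneg r)))
  rwa [map_smul, smul_smul, ← Complex.ofReal_mul, inv_mul_cancel₀ (mul_self_pos.mpr hr.ne').ne',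
    Complex.ofReal_one, one_smul] at this

theorem exists_mulVec_eq_smul_tensorVec_lineVec {d : ℕ} {ι κ : Type*} [Fintype ι] [Fintype κ]
    {E : κ → Matrix (Fin d × Fin d) ι ℂ}
    (hsurj : {σ | IsSeparableState σ} ⊆ krausMap E '' {ρ | ρ.PosSemidef ∧ ρ.trace = 1})
    {i₀ i₁ : Fin d} (h : i₀ ≠ i₁) (t : ℝ) :
    ∃ α : κ → ℂ, α ≠ 0 ∧ ∃ ψ : ι → ℂ,
      ∀ i, E i *ᵥ ψ = α i • tensorVec (lineVec i₀ i₁ t) (lineVec i₀ i₁ t) := by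
  have hu : lineVec i₀ i₁ t ≠ 0 := fun hu => by
    simpa [lineVec, h.symm] using congrFun hu i₀
  obtain ⟨r, hr, hunit⟩ := exists_ofReal_smul_unit hu
  obtain ⟨ρ, ⟨hρ, -⟩, hρp⟩ := hsurj (isSeparableState_vecMulVec_tensorVec hunit hunit)
  obtain ⟨ψ, hspan, i, hi⟩ := exists_forall_mulVec_mem_span_of_krausMap_eq hρ
    (fun h0 => by
      have := congrArg (fun p => star p ⬝ᵥ p) h0
      rw [star_tensorVec, tensorVec_dotProduct_tensorVec, hunit] at this
      simp at this) hρp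
  rw [smul_tensorVec_smul, Submodule.span_singleton_smul_eq (by simpa using hr.ne')] at hspan
  choose α hα using fun i => Submodule.mem_span_singleton.mp (hspan i)
  exact ⟨α, fun h0 => hi (by rw [← hα, h0, Pi.zero_apply, zero_smul]), ψ, fun i => (hα i).symm⟩

theorem dotProduct_star_eq_zero_of_posSemidef_partialTranspose {n ι κ : Type*} [Fintype n]
    [DecidableEq n] [Fintype ι] [Fintype κ] {i₀ i₁ : n} (h : i₀ ≠ i₁)
    {E : κ → Matrix (n × n) ι ℂ}
    (hPPT : ∀ v, (partialTranspose (krausMap E (vecMulVec v (star v)))).PosSemidef)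
    {s t : ℝ} (hst : s ≠ t) {ψ φ : ι → ℂ} {α β : κ → ℂ}
    (hψ : ∀ i, E i *ᵥ ψ = α i • tensorVec (lineVec i₀ i₁ s) (lineVec i₀ i₁ s))
    (hφ : ∀ i, E i *ᵥ φ = β i • tensorVec (lineVec i₀ i₁ t) (lineVec i₀ i₁ t)) :
    α ⬝ᵥ star β = 0 := by
  set μ := α ⬝ᵥ star β
  have hv : ∀ i, E i *ᵥ (ψ - μ • φ) = α i • tensorVec (lineVec i₀ i₁ s) (lineVec i₀ i₁ s)
      + (-(μ * β i)) • tensorVec (lineVec i₀ i₁ t) (lineVec i₀ i₁ t) := fun i => by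
    rw [mulVec_sub, mulVec_smul, hψ, hφ, smul_smul, neg_smul, sub_eq_add_neg]
  -- the witness evaluates to `-2 (s - t)⁴ |μ|²` on this `v`
  have hq := (hPPT (ψ - μ • φ)).dotProduct_mulVec_nonneg (pptWitness i₀ i₁ s t)
  simp only [krausMap_vecMulVec, hv, map_sum, sum_mulVec, dotProduct_sum,
    star_pptWitness_dotProduct_partialTranspose h] at hq
  have hstar : star μ = ∑ i, β i * star (α i) := by
    simp only [μ, dotProduct, star_sum, star_mul, Pi.star_apply, star_star]
  have hαβ : ∑ i, α i * star (μ * β i) = star μ * μ := by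
    simp_rw [star_mul', mul_left_comm (α _)]
    rw [← mul_sum]
    rfl
  have hβα : ∑ i, μ * β i * star (α i) = μ * star μ := by
    simp_rw [mul_assoc]
    rw [← mul_sum, hstar]
  rw [← mul_sum] at hq
  simp only [star_neg, mul_neg, neg_mul, ← neg_add, sum_neg_distrib, sum_add_distrib, hαβ,
    hβα] at hq
  rw [mul_comm μ, ← two_mul, ← mul_assoc, neg_nonneg] at hq
  have hK : (0 : ℂ) < (((s - t) ^ 4 : ℝ) : ℂ) * 2 :=
    mul_pos (Complex.zero_lt_real.mpr (Even.pow_pos (by decide) (sub_ne_zero.mpr hst))) two_pos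
  exact (CStarRing.star_mul_self_eq_zero_iff μ).mp <|
    le_antisymm (le_of_mul_le_mul_left (by rwa [mul_zero]) hK) (star_mul_self_nonneg μ)

theorem no_perfect_disentangler_general {n d k : ℕ} (hd : 2 ≤ d)
    (E : Fin k → Matrix (Fin d × Fin d) (Fin n) ℂ) :
    ¬ ((fun ρ => ∑ i, E i * ρ * (E i)ᴴ) ''
        {ρ : Matrix (Fin n) (Fin n) ℂ | ρ.PosSemidef ∧ ρ.trace = 1}
      = {σ : Matrix (Fin d × Fin d) (Fin d × Fin d) ℂ | IsSeparableState σ}) := by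
  intro h
  change krausMap E '' _ = _ at h
  have h01 : (⟨0, by omega⟩ : Fin d) ≠ ⟨1, by omega⟩ := by simp
  have hPPT := posSemidef_partialTranspose_krausMap_vecMulVec h.le
  choose α hα ψ hψ using fun t : Fin (k + 1) =>
    exists_mulVec_eq_smul_tensorVec_lineVec h.ge h01 t
  have hli : LinearIndependent ℂ fun t => WithLp.toLp 2 (α t) :=
    linearIndependent_of_ne_zero_of_inner_eq_zero (by simpa using hα) fun s t hst =>
      dotProduct_star_eq_zero_of_posSemidef_partialTranspose h01 hPPT
        (by exact_mod_cast (Fin.val_injective.ne hst).symm) (hψ t) (hψ s)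
  simpa using hli.fintype_card_le_finrank

/-- no perfect disentanglers: for dim K = d ≥ 2 and any finite-dimensional
input space H = ℂ^n, no superoperator Φ(ρ) = ∑ E_i ρ E_i† (completely positive,
trace-nonincreasing: ∑ E_i† E_i ≼ I) maps the set of density matrices on H *onto*
exactly the set of separable states on K ⊗ K. -/
theorem no_perfect_disentangler {n d k : ℕ} (hd : 2 ≤ d)
    (E : Fin k → Matrix (Fin d × Fin d) (Fin n) ℂ)
    (hE : ((1 : Matrix (Fin n) (Fin n) ℂ) - ∑ i, (E i)ᴴ * E i).PosSemidef) :
    ¬ ((fun ρ => ∑ i, E i * ρ * (E i)ᴴ) ''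
        {ρ : Matrix (Fin n) (Fin n) ℂ | ρ.PosSemidef ∧ ρ.trace = 1}
      = {σ : Matrix (Fin d × Fin d) (Fin d × Fin d) ℂ | IsSeparableState σ}) :=
  no_perfect_disentangler_general hd E
end
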